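/- arXiv:math/0108165 — 5 statements merged into one kernel-verified Lean document; each statement's English description precedes it below -/
import Mathlib

section
/- Let Θ(z, χ, s) be a real formal power series (meaning Θ(z,χ,s) equals the series obtained by swapping z and χ and conjugating coefficients) defining a normal-form hypersurface, with associated solution Q of w = Q(z,χ,τ) as in the implicit function construction, and assume Θ_{s^j}(z,χ,0) ≡ 0 for all j < m where m ≥ 2 is finite. Then ∂^j Q/∂τ^j(z,χ,0) equals 0 for 2 ≤ j < m, equals 1 for j = 1, Q(z,χ,0) ≡ 0, and Q_{τ^m}(z,χ,0) = 2i·Θ_{s^m}(z,χ,0). -/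
/-- Formal substitution of a family `a` of power series into `f`. -/
noncomputable def substF {σ τ : Type*} (a : σ → MvPowerSeries τ ℂ)
    (f : MvPowerSeries σ ℂ) : MvPowerSeries τ ℂ :=
  fun e => ∑ᶠ d : σ →₀ ℕ, MvPowerSeries.coeff d f *
    MvPowerSeries.coeff e (d.prod fun s n => a s ^ n)

/-- Swap of the exponents of the first two variables (`z ↔ χ`). -/
noncomputable def swap01 (e : Fin 3 →₀ ℕ) : Fin 3 →₀ ℕ :=
  Finsupp.equivMapDomain (Equiv.swap (0 : Fin 3) 1) e

/-- In normal coordinates (Θ real, Θ(z,0,s) = Θ(0,χ,s) = 0, and Q the unique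
series with Q(0,0,0)=0 solving (Q−τ)/(2i) = Θ(z,χ,(Q+τ)/2)), if the Taylor coefficients
of Θ in s up to order m−1 vanish at s = 0 (m ≥ 2 finite), then Q(z,χ,0) ≡ 0,
Q_τ(z,χ,0) ≡ 1, Q_{τ^j}(z,χ,0) ≡ 0 for 2 ≤ j < m, and
Q_{τ^m}(z,χ,0) = 2i·Θ_{s^m}(z,χ,0).  (Stated coefficientwise; variables
`0 ↦ z`, `1 ↦ χ`, `2 ↦ τ` resp. `s`.) -/
theorem second_characterization_of_m (Θ Q : MvPowerSeries (Fin 3) ℂ) (m : ℕ) (hm : 2 ≤ m)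
    (hreal : ∀ e, MvPowerSeries.coeff e Θ =
      (starRingEnd ℂ) (MvPowerSeries.coeff (swap01 e) Θ))
    (hΘz : ∀ e : Fin 3 →₀ ℕ, e 1 = 0 → MvPowerSeries.coeff e Θ = 0)
    (hΘχ : ∀ e : Fin 3 →₀ ℕ, e 0 = 0 → MvPowerSeries.coeff e Θ = 0)
    (hΘm : ∀ e : Fin 3 →₀ ℕ, e 2 < m → MvPowerSeries.coeff e Θ = 0)
    (hQ0 : MvPowerSeries.constantCoeff (σ := Fin 3) (R := ℂ) Q = 0)
    (hQ : Q - MvPowerSeries.X 2 = ((2 : ℂ) * Complex.I) •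
        substF ![MvPowerSeries.X 0, MvPowerSeries.X 1,
          MvPowerSeries.C (σ := Fin 3) (R := ℂ) (2 : ℂ)⁻¹ * (Q + MvPowerSeries.X 2)] Θ) :
    (∀ e : Fin 3 →₀ ℕ, e 2 = 0 → MvPowerSeries.coeff e Q = 0) ∧
    (∀ e : Fin 3 →₀ ℕ, e 2 = 1 →
      MvPowerSeries.coeff e Q = if e = Finsupp.single 2 1 then 1 else 0) ∧
    (∀ e : Fin 3 →₀ ℕ, 2 ≤ e 2 → e 2 < m → MvPowerSeries.coeff e Q = 0) ∧
    (∀ e : Fin 3 →₀ ℕ, e 2 = m →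
      MvPowerSeries.coeff e Q = 2 * Complex.I * MvPowerSeries.coeff e Θ) := by
  classical
  set R : MvPowerSeries (Fin 3) ℂ :=
    MvPowerSeries.C (σ := Fin 3) (R := ℂ) (2 : ℂ)⁻¹ * (Q + MvPowerSeries.X 2) with hRdef
  set S : MvPowerSeries (Fin 3) ℂ :=
    substF ![MvPowerSeries.X 0, MvPowerSeries.X 1, R] Θ with hSdef
  -- exponent of the monomial part
  have hu2 : ∀ d : Fin 3 →₀ ℕ,
      (Finsupp.single (0 : Fin 3) (d 0) + Finsupp.single (1 : Fin 3) (d 1)) 2 = 0 := by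
    intro d; simp [Finsupp.single_apply]
  have hprod : ∀ d : Fin 3 →₀ ℕ,
      (d.prod fun s n => (![MvPowerSeries.X 0, MvPowerSeries.X 1, R] :
          Fin 3 → MvPowerSeries (Fin 3) ℂ) s ^ n)
        = MvPowerSeries.monomial
            (Finsupp.single 0 (d 0) + Finsupp.single (1 : Fin 3) (d 1)) (1 : ℂ) * R ^ (d 2) := by
    intro d
    rw [Finsupp.prod_fintype _ _ (fun i => pow_zero _), Fin.prod_univ_three]
    simp only [Matrix.cons_val_zero, Matrix.cons_val_one, Matrix.head_cons, Matrix.cons_val_two,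
      Matrix.tail_cons]
    rw [MvPowerSeries.X_pow_eq, MvPowerSeries.X_pow_eq, MvPowerSeries.monomial_mul_monomial,
      one_mul]
  have hSe : ∀ e : Fin 3 →₀ ℕ, MvPowerSeries.coeff e S =
      ∑ᶠ d : Fin 3 →₀ ℕ, MvPowerSeries.coeff d Θ *
        (if Finsupp.single 0 (d 0) + Finsupp.single (1 : Fin 3) (d 1) ≤ e
          then MvPowerSeries.coeff
            (e - (Finsupp.single 0 (d 0) + Finsupp.single (1 : Fin 3) (d 1))) (R ^ (d 2)) else 0) := by
    intro e
    rw [hSdef, MvPowerSeries.coeff_apply]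
    simp only [substF]
    refine finsum_congr fun d => ?_
    rw [hprod d, MvPowerSeries.coeff_monomial_mul]
    split_ifs <;> simp
  have key : ∀ e : Fin 3 →₀ ℕ, MvPowerSeries.coeff e Q =
      (if e = Finsupp.single 2 1 then 1 else 0)
        + 2 * Complex.I * MvPowerSeries.coeff e S := by
    intro e
    have h := congrArg (MvPowerSeries.coeff e) hQ
    rw [map_sub, MvPowerSeries.coeff_smul, MvPowerSeries.coeff_X] at h
    linear_combination h
  have hRc : ∀ f : Fin 3 →₀ ℕ, MvPowerSeries.coeff f R =
      (2 : ℂ)⁻¹ * (MvPowerSeries.coeff f Q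
        + (if f = Finsupp.single 2 1 then 1 else 0)) := by
    intro f
    rw [hRdef, MvPowerSeries.coeff_C_mul, map_add, MvPowerSeries.coeff_X]
  have hns : ∀ f : Fin 3 →₀ ℕ, f 2 ≠ 1 → f ≠ Finsupp.single 2 1 := by
    intro f hf hcon
    apply hf; rw [hcon]; simp
  -- Part 1, by strong induction on the total degree.
  have part1N : ∀ N : ℕ, ∀ e : Fin 3 →₀ ℕ, e 0 + e 1 + e 2 ≤ N → e 2 = 0 →
      MvPowerSeries.coeff e Q = 0 := by
    intro N
    induction N with
    | zero =>
      intro e he h2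
      have he0 : e = 0 := by
        ext i; fin_cases i <;> simp <;> omega
      rw [he0, MvPowerSeries.coeff_zero_eq_constantCoeff_apply, hQ0]
    | succ N ih =>
      intro e he h2
      rw [key e, hSe e, if_neg (hns e (by omega)),
        finsum_eq_zero_of_forall_eq_zero ?_, mul_zero, add_zero]
      intro d
      by_cases hd : MvPowerSeries.coeff d Θ = 0
      · rw [hd, zero_mul]
      · have hd0 : 1 ≤ d 0 := by
          by_contra h; push_neg at h; exact hd (hΘχ d (by omega))
        have hd1 : 1 ≤ d 1 := by
          by_contra h; push_neg at h; exact hd (hΘz d (by omega))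
        split_ifs with hle
        · obtain ⟨k, hk⟩ : ∃ k, d 2 = k + 1 := by
            rcases Nat.exists_eq_add_of_le (le_trans hm (by
              by_contra h; push_neg at h; exact hd (hΘm d h))) with ⟨k', hk'⟩
            exact ⟨2 + k' - 1, by omega⟩
          rw [hk, pow_succ, MvPowerSeries.coeff_mul, Finset.sum_eq_zero, mul_zero]
          intro p hp
          rw [Finset.HasAntidiagonal.mem_antidiagonal] at hp
          have hd0e : d 0 ≤ e 0 := by
            have := Finsupp.le_def.mp hle 0
            simpa [Finsupp.single_apply] using this
          have hd1e : d 1 ≤ e 1 := by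
            have := Finsupp.le_def.mp hle 1
            simpa [Finsupp.single_apply] using this
          have hq0 : (e - (Finsupp.single (0 : Fin 3) (d 0) + Finsupp.single (1 : Fin 3) (d 1))) 0
              = e 0 - d 0 := by
            rw [Finsupp.tsub_apply]; simp [Finsupp.single_apply]
          have hq1 : (e - (Finsupp.single (0 : Fin 3) (d 0) + Finsupp.single (1 : Fin 3) (d 1))) 1
              = e 1 - d 1 := by
            rw [Finsupp.tsub_apply]; simp [Finsupp.single_apply]
          have hq2 : (e - (Finsupp.single (0 : Fin 3) (d 0) + Finsupp.single (1 : Fin 3) (d 1))) 2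
              = 0 := by
            rw [Finsupp.tsub_apply, hu2 d]; omega
          have hple : ∀ i, p.2 i ≤
              (e - (Finsupp.single (0 : Fin 3) (d 0) + Finsupp.single (1 : Fin 3) (d 1))) i := by
            intro i
            have := congrArg (fun f : Fin 3 →₀ ℕ => f i) hp
            simp only [Finsupp.coe_add, Pi.add_apply] at this
            omega
          have hp2 : p.2 2 = 0 := by have := hple 2; omega
          have hcoeffp2 : MvPowerSeries.coeff p.2 R = 0 := by
            rw [hRc, if_neg (hns p.2 (by omega)), ih p.2 (by
              have h0 := hple 0; have h1 := hple 1; have h2' := hple 2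
              rw [hq0] at h0; rw [hq1] at h1; rw [hq2] at h2'
              omega) hp2]
            simp
          rw [hcoeffp2, mul_zero]
        · rw [mul_zero]
  have part1 : ∀ e : Fin 3 →₀ ℕ, e 2 = 0 → MvPowerSeries.coeff e Q = 0 :=
    fun e h => part1N (e 0 + e 1 + e 2) e le_rfl h
  have hR0 : ∀ f : Fin 3 →₀ ℕ, f 2 = 0 → MvPowerSeries.coeff f R = 0 := by
    intro f hf
    rw [hRc, part1 f hf, if_neg (hns f (by omega))]
    simp
  have hRpow : ∀ k : ℕ, ∀ q : Fin 3 →₀ ℕ, q 2 < k →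
      MvPowerSeries.coeff q (R ^ k) = 0 := by
    intro k
    induction k with
    | zero => intro q h; exact absurd h (Nat.not_lt_zero _)
    | succ k ih =>
      intro q h
      rw [pow_succ, MvPowerSeries.coeff_mul]
      apply Finset.sum_eq_zero
      intro p hp
      rw [Finset.HasAntidiagonal.mem_antidiagonal] at hp
      have hsum : p.1 2 + p.2 2 = q 2 := by
        have := congrArg (fun f : Fin 3 →₀ ℕ => f 2) hp
        simpa using this
      by_cases h2 : p.2 2 = 0
      · rw [hR0 p.2 h2, mul_zero]
      · rw [ih p.1 (by omega), zero_mul]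
  have hSlow : ∀ e : Fin 3 →₀ ℕ, e 2 < m → MvPowerSeries.coeff e S = 0 := by
    intro e he
    rw [hSe]
    apply finsum_eq_zero_of_forall_eq_zero
    intro d
    by_cases hd : MvPowerSeries.coeff d Θ = 0
    · rw [hd, zero_mul]
    · have hd2 : m ≤ d 2 := by
        by_contra h; push_neg at h; exact hd (hΘm d h)
      split_ifs with hle
      · rw [hRpow (d 2) _ (by rw [Finsupp.tsub_apply, hu2 d]; omega), mul_zero]
      · rw [mul_zero]
  have part2 : ∀ e : Fin 3 →₀ ℕ, e 2 = 1 →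
      MvPowerSeries.coeff e Q = if e = Finsupp.single 2 1 then 1 else 0 := by
    intro e he
    rw [key e, hSlow e (by omega), mul_zero, add_zero]
  have hR1 : ∀ f : Fin 3 →₀ ℕ, f 2 = 1 →
      MvPowerSeries.coeff f R = if f = Finsupp.single 2 1 then 1 else 0 := by
    intro f hf
    rw [hRc, part2 f hf]
    split_ifs <;> norm_num
  have hRpowE : ∀ k : ℕ, ∀ q : Fin 3 →₀ ℕ, q 2 = k →
      MvPowerSeries.coeff q (R ^ k) = if q = Finsupp.single 2 k then 1 else 0 := by
    intro k
    induction k with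
    | zero =>
      intro q hq
      rw [pow_zero, MvPowerSeries.coeff_one]
      simp [Finsupp.single_zero]
    | succ k ih =>
      intro q hq
      rw [pow_succ, MvPowerSeries.coeff_mul]
      have hterm : ∀ p : (Fin 3 →₀ ℕ) × (Fin 3 →₀ ℕ), p.1 + p.2 = q →
          p ≠ (Finsupp.single 2 k, Finsupp.single 2 1) →
          MvPowerSeries.coeff p.1 (R ^ k) * MvPowerSeries.coeff p.2 R = 0 := by
        intro p hp hne
        have hsum : p.1 2 + p.2 2 = k + 1 := by
          have := congrArg (fun f : Fin 3 →₀ ℕ => f 2) hp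
          simp only [Finsupp.coe_add, Pi.add_apply] at this
          omega
        rcases Nat.lt_trichotomy (p.2 2) 1 with h | h | h
        · rw [hR0 p.2 (by omega), mul_zero]
        · rw [hR1 p.2 h]
          by_cases hp2 : p.2 = Finsupp.single 2 1
          · rw [ih p.1 (by omega)]
            by_cases hp1 : p.1 = Finsupp.single 2 k
            · exact absurd (Prod.ext_iff.mpr ⟨hp1, hp2⟩) hne
            · rw [if_neg hp1, zero_mul]
          · rw [if_neg hp2, mul_zero]
        · rw [hRpow k p.1 (by omega), zero_mul]
      by_cases hqs : q = Finsupp.single 2 (k + 1)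
      · rw [if_pos hqs]
        rw [Finset.sum_eq_single (Finsupp.single (2 : Fin 3) k, Finsupp.single (2 : Fin 3) 1)]
        · rw [ih _ (by simp), hR1 _ (by simp), if_pos rfl, if_pos rfl, one_mul]
        · intro p hp hne
          rw [Finset.HasAntidiagonal.mem_antidiagonal] at hp
          exact hterm p hp hne
        · intro habs
          exfalso; apply habs
          rw [Finset.HasAntidiagonal.mem_antidiagonal, hqs, ← Finsupp.single_add]
      · rw [if_neg hqs]
        apply Finset.sum_eq_zero
        intro p hp
        rw [Finset.HasAntidiagonal.mem_antidiagonal] at hp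
        refine hterm p hp ?_
        intro hcon
        apply hqs
        rw [← hp, hcon]
        simp [← Finsupp.single_add]
  have part3 : ∀ e : Fin 3 →₀ ℕ, 2 ≤ e 2 → e 2 < m → MvPowerSeries.coeff e Q = 0 := by
    intro e h2 hlt
    rw [key e, hSlow e hlt, mul_zero, add_zero, if_neg (hns e (by omega))]
  have part4 : ∀ e : Fin 3 →₀ ℕ, e 2 = m →
      MvPowerSeries.coeff e Q = 2 * Complex.I * MvPowerSeries.coeff e Θ := by
    intro e he
    rw [key e, if_neg (hns e (by omega)), zero_add]
    congr 1
    rw [hSe]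
    rw [finsum_eq_single _ e ?_]
    · have hle : Finsupp.single (0 : Fin 3) (e 0) + Finsupp.single (1 : Fin 3) (e 1) ≤ e := by
        rw [Finsupp.le_def]
        intro i; fin_cases i <;> simp [Finsupp.single_apply]
      rw [if_pos hle]
      have hq : e - (Finsupp.single (0 : Fin 3) (e 0) + Finsupp.single (1 : Fin 3) (e 1))
          = Finsupp.single 2 m := by
        ext i
        rw [Finsupp.tsub_apply]
        fin_cases i <;> simp [Finsupp.single_apply] <;> omega
      rw [hq, he, hRpowE m _ (by simp), if_pos rfl, mul_one]
    · intro d hd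
      by_cases hc : MvPowerSeries.coeff d Θ = 0
      · rw [hc, zero_mul]
      · have hd2 : m ≤ d 2 := by
          by_contra h; push_neg at h; exact hc (hΘm d h)
        split_ifs with hle
        · have hq2 : (e - (Finsupp.single (0 : Fin 3) (d 0) + Finsupp.single (1 : Fin 3) (d 1))) 2
              = m := by
            rw [Finsupp.tsub_apply, hu2 d]; omega
          by_cases hdm : d 2 = m
          · rw [hdm, hRpowE m _ hq2, if_neg ?_, mul_zero]
            intro habs
            apply hd
            have hue0 : d 0 ≤ e 0 := by
              simpa [Finsupp.single_apply] using Finsupp.le_def.mp hle 0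
            have hue1 : d 1 ≤ e 1 := by
              simpa [Finsupp.single_apply] using Finsupp.le_def.mp hle 1
            have h0 : e 0 - d 0 = 0 := by
              have := congrArg (fun f : Fin 3 →₀ ℕ => f 0) habs
              simpa [Finsupp.tsub_apply, Finsupp.single_apply] using this
            have h1 : e 1 - d 1 = 0 := by
              have := congrArg (fun f : Fin 3 →₀ ℕ => f 1) habs
              simpa [Finsupp.tsub_apply, Finsupp.single_apply] using this
            ext i
            fin_cases i
            · show d 0 = e 0
              omega
            · show d 1 = e 1
              omega
            · show d 2 = e 2
              omega
          · rw [hRpow (d 2) _ (by omega), mul_zero]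
        · rw [mul_zero]
  exact ⟨part1, part2, part3, part4⟩
end

section
/- In the 1-infinite type normal form, where Q(z,χ,τ) = τ·S(z,χ,τ) and θ(z,χ) := Θ_s(z,χ,0), one has S(z,χ,0) = (1 + i·θ(z,χ))/(1 − i·θ(z,χ)) as formal power series in (z,χ). -/
/-- The substitution setting the `i`-th variable to `0` and keeping the others. -/
noncomputable def setZero (i : Fin 3) : Fin 3 → MvPowerSeries (Fin 3) ℂ :=
  fun j => if j = i then 0 else MvPowerSeries.X j

/-- Formal partial derivative with respect to the `i`-th variable. -/
noncomputable def pd (i : Fin 3) (F : MvPowerSeries (Fin 3) ℂ) :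
    MvPowerSeries (Fin 3) ℂ :=
  fun e => ((e i + 1 : ℕ) : ℂ) * MvPowerSeries.coeff (e + Finsupp.single i 1) F

open MvPowerSeries Finsupp

lemma coeff_substF {σ : Type*} (a : σ → MvPowerSeries (Fin 3) ℂ) (f : MvPowerSeries σ ℂ)
    (e : Fin 3 →₀ ℕ) :
    coeff e (substF a f) =
      ∑ᶠ d : σ →₀ ℕ, coeff d f * coeff e (d.prod fun s n => a s ^ n) := rfl

lemma coeff_pd (F : MvPowerSeries (Fin 3) ℂ) (e : Fin 3 →₀ ℕ) :
    coeff e (pd 2 F) = ((e 2 + 1 : ℕ) : ℂ) * coeff (e + Finsupp.single 2 1) F := rfl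

lemma prod3 (a : Fin 3 → MvPowerSeries (Fin 3) ℂ) (d : Fin 3 →₀ ℕ) :
    (d.prod fun s n => a s ^ n) = a 0 ^ d 0 * a 1 ^ d 1 * a 2 ^ d 2 := by
  rw [Finsupp.prod_fintype _ _ (fun i => pow_zero _), Fin.prod_univ_three]

lemma single3 (d : Fin 3 →₀ ℕ) (h : d 2 = 0) :
    Finsupp.single (0 : Fin 3) (d 0) + Finsupp.single 1 (d 1) = d := by
  ext i
  fin_cases i <;> simp [Finsupp.single_apply, h]

/-- coefficient of the τ := 0 substitution -/
lemma coeff_setZero (F : MvPowerSeries (Fin 3) ℂ) (e : Fin 3 →₀ ℕ) :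
    coeff e (substF (setZero 2) F) = if e 2 = 0 then coeff e F else 0 := by
  rw [coeff_substF]
  have hprod : ∀ d : Fin 3 →₀ ℕ, (d.prod fun s n => setZero 2 s ^ n)
      = (MvPowerSeries.X 0 ^ d 0 * MvPowerSeries.X 1 ^ d 1) * (0 : MvPowerSeries (Fin 3) ℂ) ^ d 2 := by
    intro d
    rw [prod3]
    simp [setZero]
  have hco : ∀ d : Fin 3 →₀ ℕ,
      coeff e (d.prod fun s n => setZero 2 s ^ n)
        = if d 2 = 0 ∧ d = e then 1 else 0 := by
    intro d
    rw [hprod d]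
    by_cases h2 : d 2 = 0
    · rw [h2, pow_zero, mul_one, MvPowerSeries.X_pow_eq, MvPowerSeries.X_pow_eq,
        MvPowerSeries.monomial_mul_monomial, one_mul, MvPowerSeries.coeff_monomial,
        single3 d h2]
      simp only [h2, true_and]
      by_cases hde : d = e <;> simp [hde]
      · exact fun h => (hde h.symm).elim
    · rw [zero_pow h2, mul_zero]
      simp [h2]
  simp only [hco]
  by_cases he : e 2 = 0
  · rw [finsum_eq_single _ e ?_]
    · simp [he]
    · intro d hd
      have : ¬ (d 2 = 0 ∧ d = e) := fun h => hd h.2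
      simp [this]
  · rw [if_neg he]
    have : ∀ d : Fin 3 →₀ ℕ,
        coeff d F * (if d 2 = 0 ∧ d = e then (1:ℂ) else 0) = 0 := by
      intro d
      have : ¬ (d 2 = 0 ∧ d = e) := by
        rintro ⟨h1, rfl⟩; exact he h1
      simp [this]
    simp only [this]
    exact finsum_zero

lemma coeff_X2mul (S : MvPowerSeries (Fin 3) ℂ) (e : Fin 3 →₀ ℕ) :
    coeff (e + Finsupp.single 2 1) (MvPowerSeries.X 2 * S) = coeff e S := by
  rw [show (MvPowerSeries.X (2 : Fin 3) : MvPowerSeries (Fin 3) ℂ) = monomial (Finsupp.single 2 1) 1 from rfl,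
    add_comm e, MvPowerSeries.coeff_add_monomial_mul, one_mul]

lemma coeff_X2mul_zero (S : MvPowerSeries (Fin 3) ℂ) (g : Fin 3 →₀ ℕ) (hg : g 2 = 0) :
    coeff g (MvPowerSeries.X 2 * S) = 0 := by
  rw [show (MvPowerSeries.X (2 : Fin 3) : MvPowerSeries (Fin 3) ℂ) = monomial (Finsupp.single 2 1) 1 from rfl,
    MvPowerSeries.coeff_monomial_mul, if_neg]
  intro hle
  have := hle 2
  simp [hg] at this

lemma coeff_X2 (g : Fin 3 →₀ ℕ) :
    coeff g (MvPowerSeries.X (2 : Fin 3) : MvPowerSeries (Fin 3) ℂ)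
      = if g = Finsupp.single 2 1 then 1 else 0 := by
  rw [show (MvPowerSeries.X (2 : Fin 3) : MvPowerSeries (Fin 3) ℂ) = monomial (Finsupp.single 2 1) 1 from rfl,
    MvPowerSeries.coeff_monomial]

lemma pow_vanish (P : MvPowerSeries (Fin 3) ℂ)
    (hP : ∀ g : Fin 3 →₀ ℕ, g 2 = 0 → coeff g P = 0) :
    ∀ (n : ℕ) (g : Fin 3 →₀ ℕ), g 2 < n → coeff g (P ^ n) = 0 := by
  intro n
  induction n with
  | zero => intro g hg; omega
  | succ n ih =>
    intro g hg
    rw [pow_succ, mul_comm, MvPowerSeries.coeff_mul]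
    apply Finset.sum_eq_zero
    intro p hp
    have hsum : p.1 + p.2 = g := Finset.HasAntidiagonal.mem_antidiagonal.mp hp
    have h2 : p.1 2 + p.2 2 = g 2 := by rw [← hsum]; rfl
    by_cases h1 : p.1 2 = 0
    · rw [hP p.1 h1, zero_mul]
    · have : p.2 2 < n := by omega
      rw [ih p.2 this, mul_zero]

lemma subst_coeff_main (Θ P : MvPowerSeries (Fin 3) ℂ)
    (hΘ0 : ∀ e : Fin 3 →₀ ℕ, e 2 = 0 → coeff e Θ = 0)
    (hPzero : ∀ g : Fin 3 →₀ ℕ, g 2 = 0 → coeff g P = 0)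
    (e : Fin 3 →₀ ℕ) (he : e 2 = 0) :
    coeff (e + Finsupp.single 2 1)
        (substF ![MvPowerSeries.X 0, MvPowerSeries.X 1, P] Θ) =
      ∑ p ∈ Finset.HasAntidiagonal.antidiagonal e,
        coeff (p.1 + Finsupp.single 2 1) Θ * coeff (p.2 + Finsupp.single 2 1) P := by
  classical
  set f : Fin 3 →₀ ℕ := e + Finsupp.single 2 1 with hf
  have hf0 : f 0 = e 0 := by simp [hf, Finsupp.single_apply]
  have hf1 : f 1 = e 1 := by simp [hf, Finsupp.single_apply]
  have hf2 : f 2 = 1 := by simp [hf, he]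
  rw [coeff_substF]
  set term : (Fin 3 →₀ ℕ) → ℂ := fun d => coeff d Θ *
    coeff f (d.prod fun s n => (![MvPowerSeries.X 0, MvPowerSeries.X 1, P] : Fin 3 → _) s ^ n)
    with hterm
  have hprodd : ∀ d : Fin 3 →₀ ℕ,
      (d.prod fun s n => (![MvPowerSeries.X 0, MvPowerSeries.X 1, P] : Fin 3 → _) s ^ n)
        = monomial (Finsupp.single 0 (d 0) + Finsupp.single 1 (d 1)) 1 * P ^ d 2 := by
    intro d
    rw [prod3]
    simp only [Matrix.cons_val_zero, Matrix.cons_val_one, Matrix.head_cons,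
      Matrix.cons_val_two, Matrix.tail_cons]
    rw [MvPowerSeries.X_pow_eq, MvPowerSeries.X_pow_eq, MvPowerSeries.monomial_mul_monomial,
      one_mul]
  set T : Finset (Fin 3 →₀ ℕ) :=
    (Finset.HasAntidiagonal.antidiagonal e).image (fun p : (Fin 3 →₀ ℕ) × (Fin 3 →₀ ℕ) => p.1 + Finsupp.single 2 1)
    with hT
  have hsupp : Function.support term ⊆ ↑T := by
    intro d hd
    have hd' : term d ≠ 0 := Function.mem_support.mp hd
    rw [hterm] at hd'
    simp only at hd'
    have hΘd : coeff d Θ ≠ 0 := left_ne_zero_of_mul hd'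
    have hcd : coeff f
        (d.prod fun s n => (![MvPowerSeries.X 0, MvPowerSeries.X 1, P] : Fin 3 → _) s ^ n) ≠ 0 :=
      right_ne_zero_of_mul hd'
    have hd2 : d 2 ≠ 0 := fun h => hΘd (hΘ0 d h)
    rw [hprodd d, MvPowerSeries.coeff_monomial_mul] at hcd
    set m : Fin 3 →₀ ℕ := Finsupp.single 0 (d 0) + Finsupp.single 1 (d 1) with hm
    have hm0 : m 0 = d 0 := by simp [hm, Finsupp.single_apply]
    have hm1 : m 1 = d 1 := by simp [hm, Finsupp.single_apply]
    have hm2 : m 2 = 0 := by simp [hm, Finsupp.single_apply]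
    have hle : m ≤ f := by
      by_contra h
      rw [if_neg h] at hcd; exact hcd rfl
    rw [if_pos hle] at hcd
    have hfm2 : (f - m) 2 = 1 := by
      rw [Finsupp.tsub_apply, hm2, hf2]
    have hd2le : ¬ (1 < d 2) := by
      intro h
      exact hcd (by rw [one_mul]; exact pow_vanish P hPzero (d 2) (f - m) (by omega))
    have hd21 : d 2 = 1 := by omega
    have hmle : m ≤ e := by
      intro i
      fin_cases i
      · show m 0 ≤ e 0
        rw [← hf0]; exact hle 0
      · show m 1 ≤ e 1
        rw [← hf1]; exact hle 1
      · show m 2 ≤ e 2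
        rw [hm2]; exact Nat.zero_le _
    have hdm : d = m + Finsupp.single 2 1 := by
      ext i
      fin_cases i <;> simp [hm0, hm1, hm2, Finsupp.single_apply, hd21]
    rw [hT]
    simp only [Finset.coe_image, Set.mem_image, Finset.mem_coe, Finset.HasAntidiagonal.mem_antidiagonal]
    exact ⟨(m, e - m), add_tsub_cancel_of_le hmle, hdm.symm⟩
  rw [finsum_eq_finset_sum_of_support_subset term hsupp, hT,
    Finset.sum_image ?hinj]
  case hinj =>
    intro p hp q hq hpq
    have h1 : p.1 = q.1 := by
      have := add_right_cancel hpq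
      exact this
    have h2 : p.2 = q.2 := by
      have hp' := Finset.HasAntidiagonal.mem_antidiagonal.mp hp
      have hq' := Finset.HasAntidiagonal.mem_antidiagonal.mp hq
      rw [h1] at hp'
      exact add_left_cancel (hp'.trans hq'.symm)
    exact Prod.ext h1 h2
  apply Finset.sum_congr rfl
  intro p hp
  have hpe : p.1 + p.2 = e := Finset.HasAntidiagonal.mem_antidiagonal.mp hp
  have hp12 : p.1 2 + p.2 2 = 0 := by
    have : (p.1 + p.2) 2 = e 2 := by rw [hpe]
    simpa [he] using this
  have hp1 : p.1 2 = 0 := by omega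
  set d : Fin 3 →₀ ℕ := p.1 + Finsupp.single 2 1 with hd
  have hd0 : d 0 = p.1 0 := by simp [hd, Finsupp.single_apply]
  have hd1 : d 1 = p.1 1 := by simp [hd, Finsupp.single_apply]
  have hd2 : d 2 = 1 := by simp [hd, hp1]
  rw [hterm]
  simp only
  rw [hprodd d, hd0, hd1, hd2, pow_one, single3 p.1 hp1,
    show f = p.1 + (p.2 + Finsupp.single 2 1) by rw [hf, ← hpe, add_assoc],
    MvPowerSeries.coeff_add_monomial_mul, one_mul]

theorem S_at_tau_zero_aux (Θ Q S : MvPowerSeries (Fin 3) ℂ)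
    (hΘ0 : ∀ e : Fin 3 →₀ ℕ, e 2 = 0 → MvPowerSeries.coeff e Θ = 0)
    (hQ : Q - MvPowerSeries.X 2 = ((2 : ℂ) * Complex.I) •
        substF ![MvPowerSeries.X 0, MvPowerSeries.X 1,
          MvPowerSeries.C (2 : ℂ)⁻¹ * (Q + MvPowerSeries.X 2)] Θ)
    (hS : Q = MvPowerSeries.X 2 * S) :
    (1 - Complex.I • substF (setZero 2) (pd 2 Θ)) * substF (setZero 2) S =
      1 + Complex.I • substF (setZero 2) (pd 2 Θ) := by
  classical
  set θt := substF (setZero 2) (pd 2 Θ) with hθt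
  set St := substF (setZero 2) S with hSt
  have hQzero : ∀ g : Fin 3 →₀ ℕ, g 2 = 0 → coeff g Q = 0 := by
    intro g hg; rw [hS]; exact coeff_X2mul_zero S g hg
  set P := MvPowerSeries.C (2:ℂ)⁻¹ * (Q + MvPowerSeries.X 2) with hP
  have hsingle2 : (Finsupp.single (2 : Fin 3) 1) 2 = 1 := by simp
  have hPco : ∀ g : Fin 3 →₀ ℕ, coeff g P
      = (2:ℂ)⁻¹ * (coeff g Q + coeff g (MvPowerSeries.X 2)) := by
    intro g; rw [hP, MvPowerSeries.coeff_C_mul, map_add]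
  have hPzero : ∀ g : Fin 3 →₀ ℕ, g 2 = 0 → coeff g P = 0 := by
    intro g hg
    rw [hPco, hQzero g hg, coeff_X2, if_neg, add_zero, mul_zero]
    intro h; rw [h] at hg; rw [hsingle2] at hg; exact one_ne_zero hg
  ext e
  rw [MvPowerSeries.coeff_mul, map_add]
  by_cases he : e 2 = 0
  · -- main case
    -- coefficient shortcuts
    have hθc : ∀ u : Fin 3 →₀ ℕ, u 2 = 0 →
        coeff u θt = coeff (u + Finsupp.single 2 1) Θ := by
      intro u hu
      rw [hθt, coeff_setZero, if_pos hu, coeff_pd, hu]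
      norm_num
    have hStc : ∀ v : Fin 3 →₀ ℕ, v 2 = 0 → coeff v St = coeff v S := by
      intro v hv
      rw [hSt, coeff_setZero, if_pos hv]
    -- the key coefficient identity from hQ
    have key := congrArg (coeff (e + Finsupp.single 2 1)) hQ
    rw [map_sub, MvPowerSeries.coeff_smul, subst_coeff_main Θ P hΘ0 hPzero e he] at key
    rw [show coeff (e + Finsupp.single 2 1) Q = coeff e S by rw [hS, coeff_X2mul]] at key
    rw [coeff_X2, show (if (e + Finsupp.single 2 1) = Finsupp.single 2 1 then (1:ℂ) else 0)
        = if e = 0 then 1 else 0 by simp [add_eq_right]] at key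
    have hPc : ∀ p : (Fin 3 →₀ ℕ) × (Fin 3 →₀ ℕ), p ∈ Finset.HasAntidiagonal.antidiagonal e →
        coeff (p.1 + Finsupp.single 2 1) Θ * coeff (p.2 + Finsupp.single 2 1) P
          = coeff (p.1 + Finsupp.single 2 1) Θ *
              ((2:ℂ)⁻¹ * (coeff p.2 S + if p.2 = 0 then 1 else 0)) := by
      intro p _
      rw [hPco, show coeff (p.2 + Finsupp.single 2 1) Q = coeff p.2 S by
          rw [hS, coeff_X2mul],
        coeff_X2, show (if (p.2 + Finsupp.single 2 1) = Finsupp.single 2 1 then (1:ℂ) else 0)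
          = if p.2 = 0 then 1 else 0 by simp [add_eq_right]]
    rw [Finset.sum_congr rfl hPc] at key
    -- rewrite LHS sum terms
    have hmem : ∀ p : (Fin 3 →₀ ℕ) × (Fin 3 →₀ ℕ), p ∈ Finset.HasAntidiagonal.antidiagonal e →
        p.1 2 = 0 ∧ p.2 2 = 0 := by
      intro p hp
      have hpe : p.1 + p.2 = e := Finset.HasAntidiagonal.mem_antidiagonal.mp hp
      have : p.1 2 + p.2 2 = e 2 := by rw [← hpe]; rfl
      omega
    have hLHS : ∀ p : (Fin 3 →₀ ℕ) × (Fin 3 →₀ ℕ), p ∈ Finset.HasAntidiagonal.antidiagonal e →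
        coeff p.1 (1 - Complex.I • θt) * coeff p.2 St
          = ((if p.1 = 0 then 1 else 0) -
              Complex.I * coeff (p.1 + Finsupp.single 2 1) Θ) * coeff p.2 S := by
      intro p hp
      obtain ⟨h1, h2⟩ := hmem p hp
      rw [map_sub, MvPowerSeries.coeff_smul, MvPowerSeries.coeff_one, hθc p.1 h1, hStc p.2 h2]
    rw [Finset.sum_congr rfl hLHS]
    -- the two delta sums
    have hC : ∑ p ∈ Finset.HasAntidiagonal.antidiagonal e,
        (if p.1 = 0 then (1:ℂ) else 0) * coeff p.2 S = coeff e S := by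
      rw [Finset.sum_eq_single_of_mem ((0 : Fin 3 →₀ ℕ), e)
        (Finset.HasAntidiagonal.mem_antidiagonal.mpr (zero_add e)) ?_]
      · simp
      · intro p hp hne
        have hpe := Finset.HasAntidiagonal.mem_antidiagonal.mp hp
        rw [if_neg, zero_mul]
        intro h
        exact hne (Prod.ext h (by rw [← hpe, h, zero_add]))
    have hB : ∑ p ∈ Finset.HasAntidiagonal.antidiagonal e,
        coeff (p.1 + Finsupp.single 2 1) Θ * (if p.2 = 0 then (1:ℂ) else 0)
          = coeff (e + Finsupp.single 2 1) Θ := by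
      rw [Finset.sum_eq_single_of_mem ((e : Fin 3 →₀ ℕ), (0 : Fin 3 →₀ ℕ))
        (Finset.HasAntidiagonal.mem_antidiagonal.mpr (add_zero e)) ?_]
      · simp
      · intro p hp hne
        have hpe := Finset.HasAntidiagonal.mem_antidiagonal.mp hp
        rw [if_neg, mul_zero]
        intro h
        exact hne (Prod.ext (by rw [← hpe, h, add_zero]) h)
    -- assemble
    have hexp : ∑ p ∈ Finset.HasAntidiagonal.antidiagonal e,
        ((if p.1 = 0 then (1:ℂ) else 0) -
          Complex.I * coeff (p.1 + Finsupp.single 2 1) Θ) * coeff p.2 S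
        = coeff e S - Complex.I * ∑ p ∈ Finset.HasAntidiagonal.antidiagonal e,
            coeff (p.1 + Finsupp.single 2 1) Θ * coeff p.2 S := by
      rw [← hC, Finset.mul_sum, ← Finset.sum_sub_distrib]
      apply Finset.sum_congr rfl
      intro p _
      ring
    have hexp2 : ∑ p ∈ Finset.HasAntidiagonal.antidiagonal e,
        coeff (p.1 + Finsupp.single 2 1) Θ *
          ((2:ℂ)⁻¹ * (coeff p.2 S + if p.2 = 0 then 1 else 0))
        = (2:ℂ)⁻¹ * ((∑ p ∈ Finset.HasAntidiagonal.antidiagonal e,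
            coeff (p.1 + Finsupp.single 2 1) Θ * coeff p.2 S)
            + coeff (e + Finsupp.single 2 1) Θ) := by
      rw [← hB, mul_add, Finset.mul_sum, Finset.mul_sum, ← Finset.sum_add_distrib]
      apply Finset.sum_congr rfl
      intro p _
      ring
    rw [hexp]
    rw [hexp2] at key
    rw [MvPowerSeries.coeff_one, MvPowerSeries.coeff_smul, hθc e he]
    linear_combination key
  · -- case e 2 ≠ 0 : everything vanishes
    have hz : ∀ p : (Fin 3 →₀ ℕ) × (Fin 3 →₀ ℕ), p ∈ Finset.HasAntidiagonal.antidiagonal e →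
        coeff p.1 (1 - Complex.I • θt) * coeff p.2 St = 0 := by
      intro p hp
      have hpe : p.1 + p.2 = e := Finset.HasAntidiagonal.mem_antidiagonal.mp hp
      have hsum : p.1 2 + p.2 2 = e 2 := by rw [← hpe]; rfl
      by_cases h2 : p.2 2 = 0
      · have h1 : p.1 2 ≠ 0 := by omega
        rw [map_sub, MvPowerSeries.coeff_smul, MvPowerSeries.coeff_one, hθt,
          coeff_setZero, if_neg h1, if_neg, mul_zero, sub_zero, zero_mul]
        intro h; rw [h] at h1; exact h1 rfl
      · rw [hSt, coeff_setZero, if_neg h2, mul_zero]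
    rw [Finset.sum_eq_zero hz, MvPowerSeries.coeff_one, if_neg, MvPowerSeries.coeff_smul,
      hθt, coeff_setZero, if_neg he, mul_zero, add_zero]
    intro h; rw [h] at he; exact he rfl

/-- In the 1-infinite type normal form (Θ real, Θ(z,0,s) = Θ(0,χ,s) = 0,
Θ(z,χ,0) ≡ 0, Q the solution of (Q−τ)/(2i) = Θ(z,χ,(Q+τ)/2) with Q(0,0,0) = 0, and
Q = τ·S), with θ(z,χ) := Θ_s(z,χ,0) one has
S(z,χ,0) = (1 + i·θ)/(1 − i·θ), i.e. (1 − i·θ)·S(z,χ,0) = 1 + i·θ.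
(Variables: `0 ↦ z`, `1 ↦ χ`, `2 ↦ τ` resp. `s`.) -/
theorem S_at_tau_zero (Θ Q S : MvPowerSeries (Fin 3) ℂ)
    (hreal : ∀ e, MvPowerSeries.coeff e Θ =
      (starRingEnd ℂ) (MvPowerSeries.coeff (swap01 e) Θ))
    (hΘz : ∀ e : Fin 3 →₀ ℕ, e 1 = 0 → MvPowerSeries.coeff e Θ = 0)
    (hΘχ : ∀ e : Fin 3 →₀ ℕ, e 0 = 0 → MvPowerSeries.coeff e Θ = 0)
    (hΘ0 : ∀ e : Fin 3 →₀ ℕ, e 2 = 0 → MvPowerSeries.coeff e Θ = 0)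
    (hQ0 : MvPowerSeries.constantCoeff Q = 0)
    (hQ : Q - MvPowerSeries.X 2 = ((2 : ℂ) * Complex.I) •
        substF ![MvPowerSeries.X 0, MvPowerSeries.X 1,
          MvPowerSeries.C (2 : ℂ)⁻¹ * (Q + MvPowerSeries.X 2)] Θ)
    (hS : Q = MvPowerSeries.X 2 * S) :
    (1 - Complex.I • substF (setZero 2) (pd 2 Θ)) * substF (setZero 2) S =
      1 + Complex.I • substF (setZero 2) (pd 2 Θ) := by
  exact S_at_tau_zero_aux Θ Q S hΘ0 hQ hS
end

section
/- Let θ and θ̂ be formal power series in (z, χ) and (ẑ, χ̂) respectively over ℂ, each vanishing when either variable is 0, and suppose θ(z,χ) = θ̂(f_0(z), f̄_0(χ)) for an invertible formal series f_0 with f_0(0) = 0. Define L := sup{ q : θ_{χ^β}(z,0) ≡ 0 for all β < q } and similarly L̂ for θ̂. If L < ∞ then L = L̂, and moreover θ_L(z) = (a)^L · θ̂_L(f_0(z)), where a := f̄_0'(0) and θ_L(z) := θ_{χ^L}(z,0), θ̂_L(ẑ) := θ̂_{χ̂^L}(ẑ,0). -/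
/-- The `χ^j`-slice of a two-variable series (variables `0 ↦ z`, `1 ↦ χ`). -/
noncomputable def sl (F : MvPowerSeries (Fin 2) ℂ) (j : ℕ) : PowerSeries ℂ :=
  fun e : Unit →₀ ℕ =>
    MvPowerSeries.coeff (Finsupp.single (0 : Fin 2) (e ()) + Finsupp.single 1 j) F

/-- The series with conjugated coefficients. -/
noncomputable def cconj {σ : Type*} (F : MvPowerSeries σ ℂ) : MvPowerSeries σ ℂ :=
  MvPowerSeries.map (starRingEnd ℂ) F

/-- The invariant `L`: the supremum of `q` such that `θ_{χ^β}(z,0) ≡ 0` for all `β < q`. -/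
noncomputable def Lval (θ : MvPowerSeries (Fin 2) ℂ) : ℕ∞ :=
  sSup {q : ℕ∞ | ∀ j : ℕ, (j : ℕ∞) < q → sl θ j = 0}



open MvPowerSeries Finsupp

noncomputable def E (p q : ℕ) : Fin 2 →₀ ℕ := Finsupp.single 0 p + Finsupp.single 1 q

lemma E_apply0 (p q : ℕ) : E p q 0 = p := by simp [E, Finsupp.single_apply]
lemma E_apply1 (p q : ℕ) : E p q 1 = q := by simp [E, Finsupp.single_apply]

lemma fin2_eq (e : Fin 2 →₀ ℕ) : e = E (e 0) (e 1) := by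
  ext i
  fin_cases i
  · simp [E, Finsupp.single_apply]
  · simp [E, Finsupp.single_apply]

lemma E_single0 (p : ℕ) : E p 0 = Finsupp.single 0 p := by simp [E]
lemma E_single1 (q : ℕ) : E 0 q = Finsupp.single 1 q := by simp [E]

-- one-variable pow lemmas
lemma coeff_pow_lt (g : PowerSeries ℂ) (hg : PowerSeries.constantCoeff g = 0) :
    ∀ p m, m < p → PowerSeries.coeff m (g ^ p) = 0 := by
  intro p
  induction p with
  | zero => intro m hm; omega
  | succ p ih =>
    intro m hm
    rw [pow_succ, PowerSeries.coeff_mul]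
    apply Finset.sum_eq_zero
    rintro ⟨a, b⟩ hab
    rw [Finset.HasAntidiagonal.mem_antidiagonal] at hab
    rcases lt_or_ge a p with h | h
    · rw [ih a h, zero_mul]
    · have : b = 0 := by omega
      subst this
      simp [PowerSeries.coeff_zero_eq_constantCoeff, hg]

lemma coeff_pow_self (g : PowerSeries ℂ) (hg : PowerSeries.constantCoeff g = 0) :
    ∀ p, PowerSeries.coeff p (g ^ p) = (PowerSeries.coeff 1 g) ^ p := by
  intro p
  induction p with
  | zero => simp
  | succ p ih =>
    rw [pow_succ, PowerSeries.coeff_mul]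
    rw [Finset.sum_eq_single (p, 1)]
    · rw [ih, pow_succ]
    · rintro ⟨a, b⟩ hab hne
      rw [Finset.HasAntidiagonal.mem_antidiagonal] at hab
      rcases lt_or_ge a p with h | h
      · rw [coeff_pow_lt g hg p a h, zero_mul]
      · have hb : b = 0 := by
          rcases Nat.lt_or_ge a (p+1) with h1 | h1
          · have : a = p := by omega
            subst this
            exfalso; exact hne (by simp; omega)
          · omega
        subst hb
        simp [PowerSeries.coeff_zero_eq_constantCoeff, hg]
    · intro h
      exfalso; exact h (by rw [Finset.HasAntidiagonal.mem_antidiagonal])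

lemma ps_coeff_eq (n : ℕ) (g : PowerSeries ℂ) :
    MvPowerSeries.coeff (Finsupp.single () n) g = PowerSeries.coeff n g := rfl

lemma coeff_substF_X (g : PowerSeries ℂ) (s : Fin 2) (e : Fin 2 →₀ ℕ) :
    MvPowerSeries.coeff e
      (substF (fun _ : Unit => (MvPowerSeries.X s : MvPowerSeries (Fin 2) ℂ)) g) =
    if e = Finsupp.single s (e s) then PowerSeries.coeff (e s) g else 0 := by
  have h1 : ∀ d : Unit →₀ ℕ,
      (d.prod fun _ n => (MvPowerSeries.X s : MvPowerSeries (Fin 2) ℂ) ^ n) =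
      MvPowerSeries.X s ^ d () := by
    intro d
    rw [Finsupp.prod_pow]
    exact Fintype.prod_unique _
  rw [MvPowerSeries.coeff_apply]
  unfold substF
  simp only [h1]
  rw [finsum_eq_single _ (Finsupp.single () (e s))]
  · rw [MvPowerSeries.coeff_X_pow]
    simp only [Finsupp.single_eq_same, ps_coeff_eq]
    split_ifs <;> simp
  · intro d hd
    rw [MvPowerSeries.coeff_X_pow]
    split_ifs with h
    · exfalso
      apply hd
      have he : e s = d () := by rw [h]; simp
      rw [Finsupp.unique_single d, he]
    · rw [mul_zero]

lemma eq_single0_iff (e : Fin 2 →₀ ℕ) : e = Finsupp.single 0 (e 0) ↔ e 1 = 0 := by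
  constructor
  · intro h
    conv_lhs => rw [h]
    simp [Finsupp.single_apply]
  · intro h
    conv_lhs => rw [fin2_eq e]
    rw [h]
    simp [E]

lemma eq_single1_iff (e : Fin 2 →₀ ℕ) : e = Finsupp.single 1 (e 1) ↔ e 0 = 0 := by
  constructor
  · intro h
    conv_lhs => rw [h]
    simp [Finsupp.single_apply]
  · intro h
    conv_lhs => rw [fin2_eq e]
    rw [h]
    simp [E]

/-- `F` depends only on `z` with slice `f`. -/
def IsZ (F : MvPowerSeries (Fin 2) ℂ) (f : PowerSeries ℂ) : Prop :=
  ∀ e : Fin 2 →₀ ℕ, MvPowerSeries.coeff e F =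
    if e 1 = 0 then PowerSeries.coeff (e 0) f else 0

def IsW (F : MvPowerSeries (Fin 2) ℂ) (f : PowerSeries ℂ) : Prop :=
  ∀ e : Fin 2 →₀ ℕ, MvPowerSeries.coeff e F =
    if e 0 = 0 then PowerSeries.coeff (e 1) f else 0

lemma isZ_one : IsZ 1 1 := by
  intro e
  rw [MvPowerSeries.coeff_one]
  by_cases h : e = 0
  · subst h; simp
  · rw [if_neg h]
    split_ifs with h1
    · rw [show PowerSeries.coeff (e 0) (1 : PowerSeries ℂ) = if e 0 = 0 then 1 else 0 from ?_]
      · rw [if_neg]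
        intro h0
        apply h
        rw [fin2_eq e, h0, h1]
        simp [E]
      · simp [PowerSeries.coeff_one]
    · rfl

lemma isW_one : IsW 1 1 := by
  intro e
  rw [MvPowerSeries.coeff_one]
  by_cases h : e = 0
  · subst h; simp
  · rw [if_neg h]
    split_ifs with h1
    · rw [show PowerSeries.coeff (e 1) (1 : PowerSeries ℂ) = if e 1 = 0 then 1 else 0 from ?_]
      · rw [if_neg]
        intro h0
        apply h
        rw [fin2_eq e, h0, h1]
        simp [E]
      · simp [PowerSeries.coeff_one]
    · rfl

lemma isZ_mul {F G : MvPowerSeries (Fin 2) ℂ} {f g : PowerSeries ℂ}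
    (hF : IsZ F f) (hG : IsZ G g) : IsZ (F * G) (f * g) := by
  intro e
  rw [MvPowerSeries.coeff_mul]
  by_cases he : e 1 = 0
  · rw [if_pos he, PowerSeries.coeff_mul]
    refine Finset.sum_nbij' (fun uv => (uv.1 0, uv.2 0))
      (fun ab => (Finsupp.single 0 ab.1, Finsupp.single 0 ab.2)) ?_ ?_ ?_ ?_ ?_
    · rintro ⟨u, v⟩ huv
      rw [Finset.HasAntidiagonal.mem_antidiagonal] at huv ⊢
      rw [← huv]; simp
    · rintro ⟨a, b⟩ hab
      rw [Finset.HasAntidiagonal.mem_antidiagonal] at hab ⊢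
      rw [← Finsupp.single_add, hab, ← (eq_single0_iff e).2 he]
    · rintro ⟨u, v⟩ huv
      rw [Finset.HasAntidiagonal.mem_antidiagonal] at huv
      have hu1 : u 1 = 0 := by
        have := congrArg (fun w : Fin 2 →₀ ℕ => w 1) huv
        simp at this; omega
      have hv1 : v 1 = 0 := by
        have := congrArg (fun w : Fin 2 →₀ ℕ => w 1) huv
        simp at this; omega
      simp only [Prod.mk.injEq]
      exact ⟨((eq_single0_iff u).2 hu1).symm, ((eq_single0_iff v).2 hv1).symm⟩
    · rintro ⟨a, b⟩ _
      simp
    · rintro ⟨u, v⟩ huv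
      rw [Finset.HasAntidiagonal.mem_antidiagonal] at huv
      have hu1 : u 1 = 0 := by
        have := congrArg (fun w : Fin 2 →₀ ℕ => w 1) huv
        simp at this; omega
      have hv1 : v 1 = 0 := by
        have := congrArg (fun w : Fin 2 →₀ ℕ => w 1) huv
        simp at this; omega
      rw [hF u, hG v, if_pos hu1, if_pos hv1]
  · rw [if_neg he]
    apply Finset.sum_eq_zero
    rintro ⟨u, v⟩ huv
    rw [Finset.HasAntidiagonal.mem_antidiagonal] at huv
    have : u 1 + v 1 = e 1 := by
      have := congrArg (fun w : Fin 2 →₀ ℕ => w 1) huv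
      simpa using this
    rcases Nat.eq_zero_or_pos (u 1) with hu | hu
    · have hv : v 1 ≠ 0 := by omega
      rw [hG v, if_neg hv, mul_zero]
    · rw [hF u, if_neg (by omega), zero_mul]

lemma isW_mul {F G : MvPowerSeries (Fin 2) ℂ} {f g : PowerSeries ℂ}
    (hF : IsW F f) (hG : IsW G g) : IsW (F * G) (f * g) := by
  intro e
  rw [MvPowerSeries.coeff_mul]
  by_cases he : e 0 = 0
  · rw [if_pos he, PowerSeries.coeff_mul]
    refine Finset.sum_nbij' (fun uv => (uv.1 1, uv.2 1))
      (fun ab => (Finsupp.single 1 ab.1, Finsupp.single 1 ab.2)) ?_ ?_ ?_ ?_ ?_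
    · rintro ⟨u, v⟩ huv
      rw [Finset.HasAntidiagonal.mem_antidiagonal] at huv ⊢
      rw [← huv]; simp
    · rintro ⟨a, b⟩ hab
      rw [Finset.HasAntidiagonal.mem_antidiagonal] at hab ⊢
      rw [← Finsupp.single_add, hab, ← (eq_single1_iff e).2 he]
    · rintro ⟨u, v⟩ huv
      rw [Finset.HasAntidiagonal.mem_antidiagonal] at huv
      have hu1 : u 0 = 0 := by
        have := congrArg (fun w : Fin 2 →₀ ℕ => w 0) huv
        simp at this; omega
      have hv1 : v 0 = 0 := by
        have := congrArg (fun w : Fin 2 →₀ ℕ => w 0) huv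
        simp at this; omega
      simp only [Prod.mk.injEq]
      exact ⟨((eq_single1_iff u).2 hu1).symm, ((eq_single1_iff v).2 hv1).symm⟩
    · rintro ⟨a, b⟩ _
      simp
    · rintro ⟨u, v⟩ huv
      rw [Finset.HasAntidiagonal.mem_antidiagonal] at huv
      have hu1 : u 0 = 0 := by
        have := congrArg (fun w : Fin 2 →₀ ℕ => w 0) huv
        simp at this; omega
      have hv1 : v 0 = 0 := by
        have := congrArg (fun w : Fin 2 →₀ ℕ => w 0) huv
        simp at this; omega
      rw [hF u, hG v, if_pos hu1, if_pos hv1]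
  · rw [if_neg he]
    apply Finset.sum_eq_zero
    rintro ⟨u, v⟩ huv
    rw [Finset.HasAntidiagonal.mem_antidiagonal] at huv
    have : u 0 + v 0 = e 0 := by
      have := congrArg (fun w : Fin 2 →₀ ℕ => w 0) huv
      simpa using this
    rcases Nat.eq_zero_or_pos (u 0) with hu | hu
    · have hv : v 0 ≠ 0 := by omega
      rw [hG v, if_neg hv, mul_zero]
    · rw [hF u, if_neg (by omega), zero_mul]

lemma isZ_pow {F : MvPowerSeries (Fin 2) ℂ} {f : PowerSeries ℂ} (hF : IsZ F f) (p : ℕ) :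
    IsZ (F ^ p) (f ^ p) := by
  induction p with
  | zero => simpa using isZ_one
  | succ p ih => rw [pow_succ, pow_succ]; exact isZ_mul ih hF

lemma isW_pow {F : MvPowerSeries (Fin 2) ℂ} {f : PowerSeries ℂ} (hF : IsW F f) (p : ℕ) :
    IsW (F ^ p) (f ^ p) := by
  induction p with
  | zero => simpa using isW_one
  | succ p ih => rw [pow_succ, pow_succ]; exact isW_mul ih hF

lemma coeff_E_mul {F G : MvPowerSeries (Fin 2) ℂ} {f g : PowerSeries ℂ}
    (hF : IsZ F f) (hG : IsW G g) (m j : ℕ) :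
    MvPowerSeries.coeff (E m j) (F * G) =
      PowerSeries.coeff m f * PowerSeries.coeff j g := by
  rw [MvPowerSeries.coeff_mul]
  rw [Finset.sum_eq_single_of_mem (Finsupp.single 0 m, Finsupp.single 1 j)]
  · rw [hF, hG]
    simp [Finsupp.single_apply]
  · rw [Finset.HasAntidiagonal.mem_antidiagonal]; rfl
  · rintro ⟨u, v⟩ huv hne
    rw [Finset.HasAntidiagonal.mem_antidiagonal] at huv
    have h0 : u 0 + v 0 = m := by
      have := congrArg (fun w : Fin 2 →₀ ℕ => w 0) huv
      simpa [E_apply0] using this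
    have h1 : u 1 + v 1 = j := by
      have := congrArg (fun w : Fin 2 →₀ ℕ => w 1) huv
      simpa [E_apply1] using this
    by_cases hu : u 1 = 0
    · by_cases hv : v 0 = 0
      · exfalso
        apply hne
        have hu' : u = Finsupp.single 0 (u 0) := (eq_single0_iff u).2 hu
        have hv' : v = Finsupp.single 1 (v 1) := (eq_single1_iff v).2 hv
        have hum : u 0 = m := by omega
        have hvj : v 1 = j := by omega
        rw [Prod.mk.injEq, hu', hv', hum, hvj]
        exact ⟨rfl, rfl⟩
      · rw [hG v, if_neg hv, mul_zero]
    · rw [hF u, if_neg hu, zero_mul]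

lemma coeff_sl (F : MvPowerSeries (Fin 2) ℂ) (j m : ℕ) :
    PowerSeries.coeff m (sl F j) = MvPowerSeries.coeff (E m j) F := by
  rw [← ps_coeff_eq, MvPowerSeries.coeff_apply]
  show MvPowerSeries.coeff
    (Finsupp.single 0 ((Finsupp.single () m) ()) + Finsupp.single 1 j) F = _
  simp [E]

lemma coeff_cconj (g : PowerSeries ℂ) (n : ℕ) :
    PowerSeries.coeff n (cconj g) = (starRingEnd ℂ) (PowerSeries.coeff n g) := by
  rw [← ps_coeff_eq, cconj, MvPowerSeries.coeff_map, ps_coeff_eq]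

lemma coeff_Sub (f₀ : PowerSeries ℂ) (hf₀0 : PowerSeries.constantCoeff f₀ = 0)
    (g : PowerSeries ℂ) (m : ℕ) :
    PowerSeries.coeff m (substF (fun _ : Unit => f₀) g) =
      ∑ p ∈ Finset.range (m + 1),
        PowerSeries.coeff p g * PowerSeries.coeff m (f₀ ^ p) := by
  have h1 : ∀ d : Unit →₀ ℕ, (d.prod fun _ n => f₀ ^ n) = f₀ ^ d () := by
    intro d
    rw [Finsupp.prod_pow]
    exact Fintype.prod_unique _
  rw [← ps_coeff_eq, MvPowerSeries.coeff_apply]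
  unfold substF
  simp only [h1]
  rw [finsum_eq_sum_of_support_subset _
    (s := (Finset.range (m + 1)).image (fun p => Finsupp.single () p)) ?_]
  · rw [Finset.sum_image (by intro x _ y _ h; simpa using Finsupp.unique_single_eq_iff.1 h)]
    apply Finset.sum_congr rfl
    intro p _
    rw [show ((Finsupp.single () p) ()) = p from by simp] at *
    rw [ps_coeff_eq, ps_coeff_eq]
  · intro d hd
    simp only [Function.mem_support, ne_eq] at hd
    have hdm : d () ≤ m := by
      by_contra hc
      apply hd
      rw [ps_coeff_eq, coeff_pow_lt f₀ hf₀0 (d ()) m (by omega), mul_zero]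
    simp only [Finset.coe_image, Set.mem_image, Finset.mem_coe, Finset.mem_range]
    exact ⟨d (), by omega, (Finsupp.unique_single d).symm⟩

lemma coeff_theta (θ θhat : MvPowerSeries (Fin 2) ℂ)
    (f₀ : PowerSeries ℂ) (hf₀0 : PowerSeries.constantCoeff f₀ = 0)
    (hcomp : θ = substF
      ![substF (fun _ : Unit => (MvPowerSeries.X 0 : MvPowerSeries (Fin 2) ℂ)) f₀,
        substF (fun _ : Unit => (MvPowerSeries.X 1 : MvPowerSeries (Fin 2) ℂ)) (cconj f₀)]
      θhat) (m j : ℕ) :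
    MvPowerSeries.coeff (E m j) θ =
      ∑ p ∈ Finset.range (m + 1), ∑ q ∈ Finset.range (j + 1),
        MvPowerSeries.coeff (E p q) θhat *
          (PowerSeries.coeff m (f₀ ^ p) * PowerSeries.coeff j ((cconj f₀) ^ q)) := by
  set A := substF (fun _ : Unit => (MvPowerSeries.X 0 : MvPowerSeries (Fin 2) ℂ)) f₀ with hA
  set B := substF (fun _ : Unit => (MvPowerSeries.X 1 : MvPowerSeries (Fin 2) ℂ)) (cconj f₀)
    with hB
  have hAZ : IsZ A f₀ := by
    intro e
    rw [hA, coeff_substF_X]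
    by_cases h : e 1 = 0
    · rw [if_pos ((eq_single0_iff e).2 h), if_pos h]
    · rw [if_neg (fun hc => h ((eq_single0_iff e).1 hc)), if_neg h]
  have hBW : IsW B (cconj f₀) := by
    intro e
    rw [hB, coeff_substF_X]
    by_cases h : e 0 = 0
    · rw [if_pos ((eq_single1_iff e).2 h), if_pos h]
    · rw [if_neg (fun hc => h ((eq_single1_iff e).1 hc)), if_neg h]
  have hcc0 : PowerSeries.constantCoeff (cconj f₀) = 0 := by
    have := coeff_cconj f₀ 0
    rw [PowerSeries.coeff_zero_eq_constantCoeff] at this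
    rw [this, hf₀0, map_zero]
  have hprod : ∀ d : Fin 2 →₀ ℕ,
      (d.prod fun s n => (![A, B] : Fin 2 → MvPowerSeries (Fin 2) ℂ) s ^ n) =
      A ^ d 0 * B ^ d 1 := by
    intro d
    rw [Finsupp.prod_pow, Fin.prod_univ_two]
    simp
  rw [hcomp, MvPowerSeries.coeff_apply]
  show (∑ᶠ d : Fin 2 →₀ ℕ, MvPowerSeries.coeff d θhat *
    MvPowerSeries.coeff (E m j)
      (d.prod fun s n => (![A, B] : Fin 2 → MvPowerSeries (Fin 2) ℂ) s ^ n)) = _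
  have hterm : ∀ d : Fin 2 →₀ ℕ, MvPowerSeries.coeff d θhat *
      MvPowerSeries.coeff (E m j)
        (d.prod fun s n => (![A, B] : Fin 2 → MvPowerSeries (Fin 2) ℂ) s ^ n) =
      MvPowerSeries.coeff d θhat *
        (PowerSeries.coeff m (f₀ ^ d 0) * PowerSeries.coeff j ((cconj f₀) ^ d 1)) := by
    intro d
    rw [hprod d, coeff_E_mul (isZ_pow hAZ (d 0)) (isW_pow hBW (d 1))]
  simp only [hterm]
  rw [finsum_eq_sum_of_support_subset _
    (s := ((Finset.range (m + 1)) ×ˢ (Finset.range (j + 1))).image (fun pq => E pq.1 pq.2)) ?_]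
  · rw [Finset.sum_image ?_]
    · rw [Finset.sum_product]
      apply Finset.sum_congr rfl
      intro p _
      apply Finset.sum_congr rfl
      intro q _
      rw [E_apply0, E_apply1]
    · rintro ⟨p, q⟩ _ ⟨p', q'⟩ _ h
      have h0 := congrArg (fun w : Fin 2 →₀ ℕ => w 0) h
      have h1 := congrArg (fun w : Fin 2 →₀ ℕ => w 1) h
      simp only [E_apply0, E_apply1] at h0 h1
      simp [Prod.ext_iff, h0, h1]
  · intro d hd
    simp only [Function.mem_support, ne_eq] at hd
    have hdm : d 0 ≤ m := by
      by_contra hc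
      exact hd (by rw [coeff_pow_lt f₀ hf₀0 (d 0) m (by omega)]; ring)
    have hdj : d 1 ≤ j := by
      by_contra hc
      exact hd (by rw [coeff_pow_lt (cconj f₀) hcc0 (d 1) j (by omega)]; ring)
    simp only [Finset.coe_image, Set.mem_image, Finset.mem_coe, Finset.mem_product,
      Finset.mem_range]
    exact ⟨(d 0, d 1), ⟨by omega, by omega⟩, (fin2_eq d).symm⟩

lemma Sub_zero (f₀ : PowerSeries ℂ) (hf₀0 : PowerSeries.constantCoeff f₀ = 0) :
    substF (fun _ : Unit => f₀) (0 : PowerSeries ℂ) = 0 := by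
  apply PowerSeries.ext
  intro m
  rw [coeff_Sub f₀ hf₀0]
  simp

lemma Sub_smul (f₀ : PowerSeries ℂ) (hf₀0 : PowerSeries.constantCoeff f₀ = 0)
    (c : ℂ) (g : PowerSeries ℂ) :
    substF (fun _ : Unit => f₀) (c • g) = c • substF (fun _ : Unit => f₀) g := by
  apply PowerSeries.ext
  intro m
  rw [map_smul, coeff_Sub f₀ hf₀0, coeff_Sub f₀ hf₀0, Finset.smul_sum]
  apply Finset.sum_congr rfl
  intro p _
  rw [map_smul]
  simp [mul_assoc]

lemma Sub_ne_zero (f₀ : PowerSeries ℂ) (hf₀0 : PowerSeries.constantCoeff f₀ = 0)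
    (hf₀1 : PowerSeries.coeff 1 f₀ ≠ 0) {g : PowerSeries ℂ} (hg : g ≠ 0) :
    substF (fun _ : Unit => f₀) g ≠ 0 := by
  have hex : ∃ p, PowerSeries.coeff p g ≠ 0 := by
    by_contra hc
    push_neg at hc
    exact hg (PowerSeries.ext fun p => by rw [hc p, map_zero])
  set p₀ := Nat.find hex with hp₀
  intro hzero
  have := congrArg (PowerSeries.coeff p₀) hzero
  rw [coeff_Sub f₀ hf₀0, map_zero] at this
  rw [Finset.sum_eq_single_of_mem p₀ (by simp)] at this
  · rw [coeff_pow_self f₀ hf₀0] at this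
    exact (mul_ne_zero (Nat.find_spec hex) (pow_ne_zero _ hf₀1)) this
  · intro p hp hne
    rw [Finset.mem_range] at hp
    have h : p < p₀ := by omega
    rw [not_not.1 (Nat.find_min hex h), zero_mul]

lemma Lval_eq_natfind (F : MvPowerSeries (Fin 2) ℂ) (N : ℕ)
    (h0 : ∀ j, j < N → sl F j = 0) (hN : sl F N ≠ 0) : Lval F = (N : ℕ∞) := by
  apply le_antisymm
  · apply sSup_le
    intro q hq
    by_contra hc
    push_neg at hc
    exact hN (hq N hc)
  · apply le_sSup
    intro j hj
    exact h0 j (by exact_mod_cast hj)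

lemma key_slice (θ θhat : MvPowerSeries (Fin 2) ℂ)
    (f₀ : PowerSeries ℂ) (hf₀0 : PowerSeries.constantCoeff f₀ = 0)
    (hcomp : θ = substF
      ![substF (fun _ : Unit => (MvPowerSeries.X 0 : MvPowerSeries (Fin 2) ℂ)) f₀,
        substF (fun _ : Unit => (MvPowerSeries.X 1 : MvPowerSeries (Fin 2) ℂ)) (cconj f₀)]
      θhat) (j : ℕ) :
    sl θ j = ∑ q ∈ Finset.range (j + 1),
      (PowerSeries.coeff j ((cconj f₀) ^ q)) • substF (fun _ : Unit => f₀) (sl θhat q) := by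
  apply PowerSeries.ext
  intro m
  rw [coeff_sl, coeff_theta θ θhat f₀ hf₀0 hcomp, map_sum, Finset.sum_comm]
  apply Finset.sum_congr rfl
  intro q _
  rw [map_smul, coeff_Sub f₀ hf₀0, smul_eq_mul, Finset.mul_sum]
  apply Finset.sum_congr rfl
  intro p _
  rw [coeff_sl]
  ring


/-- If `θ(z,χ) = θ̂(f₀(z), f̄₀(χ))` for an invertible formal series `f₀`
with `f₀(0) = 0`, where `θ`, `θ̂` vanish when either variable is `0`, then (when finite)
the invariants `L` coincide, and `θ_L(z) = a^L·θ̂_L(f₀(z))` with `a = conj f₀'(0)`. -/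
theorem L_invariance (θ θhat : MvPowerSeries (Fin 2) ℂ)
    (hθz : ∀ e : Fin 2 →₀ ℕ, e 1 = 0 → MvPowerSeries.coeff e θ = 0)
    (hθχ : ∀ e : Fin 2 →₀ ℕ, e 0 = 0 → MvPowerSeries.coeff e θ = 0)
    (hθhatz : ∀ e : Fin 2 →₀ ℕ, e 1 = 0 → MvPowerSeries.coeff e θhat = 0)
    (hθhatχ : ∀ e : Fin 2 →₀ ℕ, e 0 = 0 → MvPowerSeries.coeff e θhat = 0)
    (f₀ : PowerSeries ℂ) (hf₀0 : PowerSeries.constantCoeff f₀ = 0)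
    (hf₀1 : PowerSeries.coeff 1 f₀ ≠ 0)
    (hf₀inv : ∃ finv : PowerSeries ℂ, PowerSeries.constantCoeff finv = 0 ∧
      substF (fun _ : Unit => finv) f₀ = PowerSeries.X ∧
      substF (fun _ : Unit => f₀) finv = PowerSeries.X)
    (hcomp : θ = substF
      ![substF (fun _ : Unit => (MvPowerSeries.X 0 : MvPowerSeries (Fin 2) ℂ)) f₀,
        substF (fun _ : Unit => (MvPowerSeries.X 1 : MvPowerSeries (Fin 2) ℂ)) (cconj f₀)]
      θhat)
    (hfin : Lval θ ≠ ⊤) :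
    Lval θ = Lval θhat ∧
    ((((Lval θ).toNat).factorial : ℂ) • sl θ (Lval θ).toNat =
      ((starRingEnd ℂ) (PowerSeries.coeff 1 f₀)) ^ (Lval θ).toNat •
        substF (fun _ : Unit => f₀)
          ((((Lval θ).toNat).factorial : ℂ) • sl θhat (Lval θ).toNat)) := by
  classical
  set a : ℂ := (starRingEnd ℂ) (PowerSeries.coeff 1 f₀) with ha_def
  have ha : a ≠ 0 := by
    simp [ha_def, hf₀1]
  have hcc0 : PowerSeries.constantCoeff (cconj f₀) = 0 := by
    have := coeff_cconj f₀ 0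
    rw [PowerSeries.coeff_zero_eq_constantCoeff] at this
    rw [this, hf₀0, map_zero]
  have hcjj : ∀ j : ℕ, PowerSeries.coeff j ((cconj f₀) ^ j) = a ^ j := by
    intro j
    rw [coeff_pow_self (cconj f₀) hcc0, coeff_cconj]
  have reduce : ∀ j : ℕ, (∀ q, q < j → sl θhat q = 0) →
      sl θ j = a ^ j • substF (fun _ : Unit => f₀) (sl θhat j) := by
    intro j hq
    rw [key_slice θ θhat f₀ hf₀0 hcomp j,
      Finset.sum_eq_single_of_mem j (by simp)]
    · rw [hcjj]
    · intro q hqm hne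
      rw [Finset.mem_range] at hqm
      rw [hq q (by omega), Sub_zero f₀ hf₀0, smul_zero]
  -- existence of a nonzero slice of θ
  have hex : ∃ j, sl θ j ≠ 0 := by
    by_contra hc
    push_neg at hc
    apply hfin
    apply le_antisymm le_top
    apply le_sSup
    intro j _
    exact hc j
  set N := Nat.find hex with hN_def
  have hNne : sl θ N ≠ 0 := Nat.find_spec hex
  have hNlt : ∀ j, j < N → sl θ j = 0 := fun j hj => not_not.1 (Nat.find_min hex hj)
  have hLθ : Lval θ = (N : ℕ∞) := Lval_eq_natfind θ N hNlt hNne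
  -- θhat slices vanish below N
  have hhatlt : ∀ j, j < N → sl θhat j = 0 := by
    intro j
    induction j using Nat.strong_induction_on with
    | _ j ih =>
      intro hj
      have h1 : ∀ q, q < j → sl θhat q = 0 := fun q hq => ih q hq (by omega)
      have h2 := reduce j h1
      rw [hNlt j hj] at h2
      rcases smul_eq_zero.1 h2.symm with h | h
      · exact absurd h (pow_ne_zero _ ha)
      · by_contra hc
        exact Sub_ne_zero f₀ hf₀0 hf₀1 hc h
  have hkeyN : sl θ N = a ^ N • substF (fun _ : Unit => f₀) (sl θhat N) := reduce N hhatlt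
  have hhatN : sl θhat N ≠ 0 := by
    intro hc
    rw [hc, Sub_zero f₀ hf₀0, smul_zero] at hkeyN
    exact hNne hkeyN
  have hLθhat : Lval θhat = (N : ℕ∞) := Lval_eq_natfind θhat N hhatlt hhatN
  have htoNat : (Lval θ).toNat = N := by rw [hLθ]; simp
  refine ⟨by rw [hLθ, hLθhat], ?_⟩
  rw [htoNat, Sub_smul f₀ hf₀0, hkeyN, smul_comm]
end

section
/- Let θ_L be a formal power series in one variable over ℂ with θ_L(z) = (θ_L^{(K)}(0)/K!)·z^K·t(z) where t(0) = 1 and θ_L^{(K)}(0) ≠ 0, and let u be the unique K-th root of t with u(0) = 1. Similarly write θ̂_L(ẑ) = (θ̂_L^{(K)}(0)/K!)·ẑ^K·û(ẑ)^K with û(0) = 1. If f_0 is a formal series with f_0(0) = 0, f_0'(0) = ā ≠ 0, satisfying θ_L(z) = a^L·θ̂_L(f_0(z)) and θ_L^{(K)}(0) = ā^K a^L θ̂_L^{(K)}(0) (a = conj ā), then f_0(z)·û(f_0(z)) = ā·z·u(z). -/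
set_option linter.unusedVariables false
open PowerSeries Finset


lemma krp_coeff_pow_eq_zero {f₀ : PowerSeries ℂ} (h0 : PowerSeries.constantCoeff f₀ = 0)
    {e m : ℕ} (h : e < m) : PowerSeries.coeff e (f₀ ^ m) = 0 := by
  have hX : (PowerSeries.X : PowerSeries ℂ) ∣ f₀ := PowerSeries.X_dvd_iff.2 h0
  exact PowerSeries.X_pow_dvd_iff.1 (pow_dvd_pow_of_dvd hX m) e h

lemma krp_prod_single (f₀ : PowerSeries ℂ) (d : Unit →₀ ℕ) :
    (d.prod fun _ n => f₀ ^ n) = f₀ ^ (d ()) := by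
  conv_lhs => rw [Finsupp.unique_single d]
  exact Finsupp.prod_single_index (pow_zero f₀)

lemma krp_coeff_unit (d : Unit →₀ ℕ) (φ : PowerSeries ℂ) :
    MvPowerSeries.coeff d φ = PowerSeries.coeff (d ()) φ := by
  rw [PowerSeries.coeff_def (s := d) rfl]

lemma krp_coeff_eq (e : ℕ) :
    (PowerSeries.coeff e : PowerSeries ℂ →ₗ[ℂ] ℂ) =
      MvPowerSeries.coeff (Finsupp.single () e) :=
  PowerSeries.coeff_def (Finsupp.single_eq_same)

lemma krp_coeff_substF {f₀ : PowerSeries ℂ} (h0 : PowerSeries.constantCoeff f₀ = 0)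
    (f : PowerSeries ℂ) (e : ℕ) :
    PowerSeries.coeff e (substF (fun _ : Unit => f₀) f) =
      ∑ n ∈ Finset.range (e + 1),
        PowerSeries.coeff n f * PowerSeries.coeff e (f₀ ^ n) := by
  have happ : PowerSeries.coeff e (substF (fun _ : Unit => f₀) f) =
      ∑ᶠ d : Unit →₀ ℕ, MvPowerSeries.coeff d f *
        MvPowerSeries.coeff (Finsupp.single () e) (d.prod fun _ n => f₀ ^ n) := by
    rw [krp_coeff_eq]
    rfl
  rw [happ]
  have hterm : ∀ d : Unit →₀ ℕ,
      MvPowerSeries.coeff d f *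
        MvPowerSeries.coeff (Finsupp.single () e) (d.prod fun _ n => f₀ ^ n) =
      PowerSeries.coeff (d ()) f * PowerSeries.coeff e (f₀ ^ (d ())) := by
    intro d
    rw [krp_prod_single, krp_coeff_unit, ← krp_coeff_eq]
  have hsub : Function.support (fun d : Unit →₀ ℕ =>
      MvPowerSeries.coeff d f *
        MvPowerSeries.coeff (Finsupp.single () e) (d.prod fun _ n => f₀ ^ n)) ⊆
      ((Finset.range (e + 1)).image (fun n => Finsupp.single () n) : Finset (Unit →₀ ℕ)) := by
    intro d hd
    simp only [Function.mem_support, hterm d] at hd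
    have hde : d () ≤ e := by
      by_contra hlt
      exact hd (by rw [krp_coeff_pow_eq_zero h0 (not_le.1 hlt), mul_zero])
    simp only [Finset.coe_image, Set.mem_image, Finset.mem_coe, Finset.mem_range]
    exact ⟨d (), Nat.lt_succ_of_le hde, (Finsupp.unique_single d).symm⟩
  rw [finsum_eq_sum_of_support_subset _ hsub,
    Finset.sum_image (fun a _ b _ h => by
      simpa using (Finsupp.unique_single_eq_iff (a := ()) (a' := ())).1 h)]
  refine Finset.sum_congr rfl fun n _ => ?_
  rw [hterm]
  simp

noncomputable def S (f₀ f : PowerSeries ℂ) : PowerSeries ℂ :=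
  substF (fun _ : Unit => f₀) f

lemma krp_coeff_S {f₀ : PowerSeries ℂ} (h0 : PowerSeries.constantCoeff f₀ = 0)
    (f : PowerSeries ℂ) (e : ℕ) :
    PowerSeries.coeff e (S f₀ f) =
      ∑ n ∈ Finset.range (e + 1),
        PowerSeries.coeff n f * PowerSeries.coeff e (f₀ ^ n) :=
  krp_coeff_substF h0 f e

section
variable {f₀ : PowerSeries ℂ} (h0 : PowerSeries.constantCoeff f₀ = 0)
include h0

lemma krp_coeff_S_aeval (f : PowerSeries ℂ) {e N : ℕ} (h : e < N) :
    PowerSeries.coeff e (S f₀ f) =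
      PowerSeries.coeff e (Polynomial.aeval f₀ (PowerSeries.trunc N f)) := by
  have hdeg : (PowerSeries.trunc N f).natDegree < N := by
    by_cases hp : PowerSeries.trunc N f = 0
    · simpa [hp] using lt_of_le_of_lt (Nat.zero_le e) h
    · exact (Polynomial.natDegree_lt_iff_degree_lt hp).2 (PowerSeries.degree_trunc_lt f N)
  rw [Polynomial.aeval_eq_sum_range' hdeg, map_sum, krp_coeff_S h0]
  have h1 : ∑ n ∈ Finset.range (e + 1),
      PowerSeries.coeff n f * PowerSeries.coeff e (f₀ ^ n) =
      ∑ n ∈ Finset.range N, PowerSeries.coeff n f * PowerSeries.coeff e (f₀ ^ n) :=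
    Finset.sum_subset (Finset.range_subset_range.2 h) (fun n _ hn => by
      rw [krp_coeff_pow_eq_zero h0 (by simpa using Finset.mem_range.not.1 hn), mul_zero])
  rw [h1]
  refine Finset.sum_congr rfl fun n hn => ?_
  rw [map_smul, smul_eq_mul, PowerSeries.coeff_trunc, if_pos (Finset.mem_range.1 hn)]

lemma krp_coeff_aeval_zero {e : ℕ} (P : Polynomial ℂ) (hP : ∀ k, k ≤ e → P.coeff k = 0) :
    PowerSeries.coeff e (Polynomial.aeval f₀ P) = 0 := by
  rw [Polynomial.aeval_eq_sum_range' (Nat.lt_succ_self P.natDegree), map_sum]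
  refine Finset.sum_eq_zero fun k _ => ?_
  rcases le_or_gt k e with hk | hk
  · rw [map_smul, smul_eq_mul, hP k hk, zero_mul]
  · rw [map_smul, smul_eq_mul, krp_coeff_pow_eq_zero h0 hk, mul_zero]

lemma krp_S_mul (f g : PowerSeries ℂ) : S f₀ (f * g) = S f₀ f * S f₀ g := by
  ext e
  set N := e + 1 with hN
  have hlt : e < N := Nat.lt_succ_self e
  rw [PowerSeries.coeff_mul]
  have hr : ∑ p ∈ Finset.HasAntidiagonal.antidiagonal e,
      PowerSeries.coeff p.1 (S f₀ f) * PowerSeries.coeff p.2 (S f₀ g) =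
      PowerSeries.coeff e
        (Polynomial.aeval f₀ (PowerSeries.trunc N f) *
          Polynomial.aeval f₀ (PowerSeries.trunc N g)) := by
    rw [PowerSeries.coeff_mul]
    refine Finset.sum_congr rfl fun p hp => ?_
    have h1 : p.1 ≤ e := (Finset.HasAntidiagonal.antidiagonal.fst_le hp)
    have h2 : p.2 ≤ e := (Finset.HasAntidiagonal.antidiagonal.snd_le hp)
    rw [krp_coeff_S_aeval h0 f (lt_of_le_of_lt h1 hlt),
      krp_coeff_S_aeval h0 g (lt_of_le_of_lt h2 hlt)]
  rw [hr, krp_coeff_S_aeval h0 (f * g) hlt, ← map_mul]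
  have key : PowerSeries.coeff e (Polynomial.aeval f₀
      (PowerSeries.trunc N f * PowerSeries.trunc N g - PowerSeries.trunc N (f * g))) = 0 := by
    refine krp_coeff_aeval_zero h0 _ fun k hk => ?_
    have hkN : k < N := lt_of_le_of_lt hk hlt
    rw [Polynomial.coeff_sub, Polynomial.coeff_mul, PowerSeries.coeff_trunc, if_pos hkN,
      PowerSeries.coeff_mul, sub_eq_zero]
    refine Finset.sum_congr rfl fun p hp => ?_
    have h1 : p.1 < N := lt_of_le_of_lt (le_trans (Finset.HasAntidiagonal.antidiagonal.fst_le hp) hk) hlt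
    have h2 : p.2 < N := lt_of_le_of_lt (le_trans (Finset.HasAntidiagonal.antidiagonal.snd_le hp) hk) hlt
    rw [PowerSeries.coeff_trunc, if_pos h1, PowerSeries.coeff_trunc, if_pos h2]
  rw [map_sub, map_sub, sub_eq_zero] at key
  exact key.symm

lemma krp_S_C_mul (α : ℂ) (g : PowerSeries ℂ) :
    S f₀ (PowerSeries.C α * g) = PowerSeries.C α * S f₀ g := by
  ext e
  rw [PowerSeries.coeff_C_mul, krp_coeff_S h0, krp_coeff_S h0, Finset.mul_sum]
  exact Finset.sum_congr rfl fun n _ => by rw [PowerSeries.coeff_C_mul, mul_assoc]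

lemma krp_S_one : S f₀ 1 = 1 := by
  ext e
  rw [krp_coeff_S h0]
  rw [Finset.sum_eq_single 0]
  · simp
  · intro n _ hn
    rw [PowerSeries.coeff_one, if_neg hn, zero_mul]
  · simp

lemma krp_S_X : S f₀ PowerSeries.X = f₀ := by
  ext e
  rw [krp_coeff_S h0]
  rcases Nat.eq_zero_or_pos e with he | he
  · subst he
    simp [PowerSeries.coeff_X, h0]
  · rw [Finset.sum_eq_single 1]
    · simp
    · intro n _ hn
      rw [PowerSeries.coeff_X, if_neg hn, zero_mul]
    · intro h
      exact absurd (Finset.mem_range.2 (by omega)) h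

lemma krp_S_pow (g : PowerSeries ℂ) (n : ℕ) : S f₀ (g ^ n) = (S f₀ g) ^ n := by
  induction n with
  | zero => simpa using krp_S_one h0
  | succ m ih => rw [pow_succ, krp_S_mul h0, ih, pow_succ]

end



lemma krp_pow_eq_one {r : PowerSeries ℂ} {K : ℕ} (hK : 1 ≤ K)
    (hr : r ^ K = 1) (h1 : PowerSeries.constantCoeff r = 1) : r = 1 := by
  ext n
  induction n using Nat.strong_induction_on with
  | _ n ih =>
    rcases Nat.eq_zero_or_pos n with hn | hn
    · subst hn; simpa using h1
    · set s : PowerSeries ℂ := r - 1 with hs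
      have hsm : ∀ m, m < n → PowerSeries.coeff m s = 0 := by
        intro m hm
        rcases Nat.eq_zero_or_pos m with h | h
        · simp [hs, h, h1]
        · have := ih m hm
          simp only [hs, map_sub]
          rw [this, sub_self]
      have hXn : (PowerSeries.X : PowerSeries ℂ) ^ n ∣ s :=
        PowerSeries.X_pow_dvd_iff.2 hsm
      have hrK : r = s + 1 := by ring
      have hexp : r ^ K = ∑ i ∈ Finset.range (K + 1),
          s ^ i * 1 ^ (K - i) * (K.choose i : PowerSeries ℂ) := by
        rw [hrK, add_pow]
      have hcoeff : PowerSeries.coeff n (r ^ K) =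
          (K : ℂ) * PowerSeries.coeff n s := by
        rw [hexp, map_sum]
        rw [Finset.sum_eq_single 1]
        · rw [pow_one, Nat.choose_one_right, mul_comm _ ((K : ℕ) : PowerSeries ℂ),
            show ((K : ℕ) : PowerSeries ℂ) = PowerSeries.C (K : ℂ) from by simp,
            ← mul_assoc, one_pow, mul_one, PowerSeries.coeff_C_mul]
        · intro i hi hi1
          rcases Nat.eq_zero_or_pos i with h | h
          · subst h
            simp only [pow_zero, one_pow, one_mul]
            rw [show ((K.choose 0 : ℕ) : PowerSeries ℂ) = PowerSeries.C (K.choose 0 : ℂ) by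
              simp, PowerSeries.coeff_C, if_neg hn.ne']
          · have h2 : 2 ≤ i := by omega
            have : (PowerSeries.X : PowerSeries ℂ) ^ (n * i) ∣
                s ^ i * 1 ^ (K - i) * (K.choose i : PowerSeries ℂ) := by
              refine Dvd.dvd.mul_right (Dvd.dvd.mul_right ?_ _) _
              calc (PowerSeries.X : PowerSeries ℂ) ^ (n * i) = (PowerSeries.X ^ n) ^ i := by
                    rw [← pow_mul]
                _ ∣ s ^ i := pow_dvd_pow_of_dvd hXn i
            exact PowerSeries.X_pow_dvd_iff.1 this n (by nlinarith)
        · intro h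
          exact absurd (Finset.mem_range.2 (by omega)) h
      rw [hr] at hcoeff
      have : PowerSeries.coeff n (1 : PowerSeries ℂ) = 0 := by
        rw [PowerSeries.coeff_one, if_neg hn.ne']
      rw [this] at hcoeff
      have hKne : (K : ℂ) ≠ 0 := Nat.cast_ne_zero.2 (by omega)
      have hsn : PowerSeries.coeff n s = 0 := by
        rcases mul_eq_zero.1 hcoeff.symm with h | h
        · exact absurd h hKne
        · exact h
      have hfin : PowerSeries.coeff n r - PowerSeries.coeff n 1 = 0 := by
        simpa [hs] using hsn
      exact sub_eq_zero.1 hfin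

lemma krp_pow_eq {p q : PowerSeries ℂ} {K : ℕ} (hK : 1 ≤ K) {α : ℂ} (hα : α ≠ 0)
    (hpq : p ^ K = q ^ K) (hp : PowerSeries.constantCoeff p = α)
    (hq : PowerSeries.constantCoeff q = α) : p = q := by
  have hqc : PowerSeries.constantCoeff q ≠ 0 := by rw [hq]; exact hα
  have hinv : q * q⁻¹ = 1 := PowerSeries.mul_inv_cancel q hqc
  set r := p * q⁻¹ with hr
  have hrK : r ^ K = 1 := by
    rw [hr, mul_pow, hpq]
    calc q ^ K * (q⁻¹) ^ K = (q * q⁻¹) ^ K := by rw [mul_pow]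
      _ = 1 := by rw [hinv, one_pow]
  have hr1 : PowerSeries.constantCoeff r = 1 := by
    rw [hr, map_mul, hp, PowerSeries.constantCoeff_inv, hq, mul_inv_cancel₀ hα]
  have := krp_pow_eq_one hK hrK hr1
  calc p = p * (q⁻¹ * q) := by rw [mul_comm q⁻¹ q, hinv, mul_one]
    _ = r * q := by rw [hr, mul_assoc]
    _ = q := by rw [this, one_mul]


/-- With `θ_L = (c/K!)·z^K·u(z)^K`, `θ̂_L = (ĉ/K!)·ẑ^K·û(ẑ)^K`
(`u(0) = û(0) = 1`, `c ≠ 0`), `f₀(0) = 0`, `f₀'(0) = ā ≠ 0`, `a = conj ā`,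
`θ_L(z) = a^L·θ̂_L(f₀(z))` and `c = ā^K·a^L·ĉ`, one has
`f₀(z)·û(f₀(z)) = ā·z·u(z)`. -/
theorem key_root_pinning (θL θhatL t u uhat f₀ : PowerSeries ℂ)
    (c chat : ℂ) (K L : ℕ) (hK : 1 ≤ K) (hL : 1 ≤ L) (hc : c ≠ 0)
    (ht : PowerSeries.constantCoeff t = 1)
    (hu : PowerSeries.constantCoeff u = 1) (huK : u ^ K = t)
    (hθL : θL = PowerSeries.C (c / (K.factorial : ℂ)) * PowerSeries.X ^ K * t)
    (huhat : PowerSeries.constantCoeff uhat = 1)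
    (hθhatL : θhatL = PowerSeries.C (chat / (K.factorial : ℂ)) *
      PowerSeries.X ^ K * uhat ^ K)
    (hf₀0 : PowerSeries.constantCoeff f₀ = 0)
    (habar : PowerSeries.coeff 1 f₀ ≠ 0)
    (hrel : θL = ((starRingEnd ℂ) (PowerSeries.coeff 1 f₀)) ^ L •
      substF (fun _ : Unit => f₀) θhatL)
    (hck : c = (PowerSeries.coeff 1 f₀) ^ K *
      ((starRingEnd ℂ) (PowerSeries.coeff 1 f₀)) ^ L * chat) :
    f₀ * substF (fun _ : Unit => f₀) uhat =
      PowerSeries.C (PowerSeries.coeff 1 f₀) * PowerSeries.X * u := by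
  show f₀ * S f₀ uhat = _
  rw [show substF (fun _ : Unit => f₀) θhatL = S f₀ θhatL from rfl] at hrel
  set abar := PowerSeries.coeff 1 f₀ with habar_def
  set a := (starRingEnd ℂ) abar with ha_def
  have ha : a ≠ 0 := by
    simp only [ha_def, ne_eq, _root_.map_eq_zero]
    exact habar
  have hchat : chat ≠ 0 := by
    intro h
    exact hc (by rw [hck, h, mul_zero])
  have hKfac : ((K.factorial : ℕ) : ℂ) ≠ 0 := Nat.cast_ne_zero.2 K.factorial_ne_zero
  set β := a ^ L * (chat / (K.factorial : ℂ)) with hβ_def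
  have hβ : β ≠ 0 := mul_ne_zero (pow_ne_zero _ ha) (div_ne_zero hchat hKfac)
  -- compute S f₀ θhatL
  have hSθ : S f₀ θhatL = PowerSeries.C (chat / (K.factorial : ℂ)) *
      f₀ ^ K * (S f₀ uhat) ^ K := by
    rw [hθhatL, krp_S_mul hf₀0, krp_S_pow hf₀0, mul_assoc (PowerSeries.C _),
      krp_S_C_mul hf₀0, krp_S_pow hf₀0, krp_S_X hf₀0, ← mul_assoc]
  -- main relation
  have hmain : PowerSeries.C β * (PowerSeries.C abar * PowerSeries.X * u) ^ K =
      PowerSeries.C β * (f₀ * S f₀ uhat) ^ K := by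
    have h1 : θL = PowerSeries.C (a ^ L) * S f₀ θhatL := by
      rw [hrel, PowerSeries.smul_eq_C_mul]
    rw [hθL, hSθ] at h1
    have hC : PowerSeries.C β * (PowerSeries.C abar * PowerSeries.X * u) ^ K =
        PowerSeries.C (c / (K.factorial : ℂ)) * PowerSeries.X ^ K * t := by
      rw [← huK, mul_pow, mul_pow, ← map_pow, ← mul_assoc, ← mul_assoc, ← map_mul]
      congr 2
      rw [hβ_def, hck]
      field_simp
    rw [hC, h1, mul_pow, ← mul_assoc, ← mul_assoc, ← map_mul, hβ_def, mul_assoc]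
  have hpoweq : (PowerSeries.C abar * PowerSeries.X * u) ^ K =
      (f₀ * S f₀ uhat) ^ K :=
    mul_left_cancel₀ (fun h => hβ (by simpa using congrArg (PowerSeries.constantCoeff) h))
      hmain
  -- factor out X
  obtain ⟨g, hg⟩ : (PowerSeries.X : PowerSeries ℂ) ∣ f₀ := PowerSeries.X_dvd_iff.2 hf₀0
  have hccg : PowerSeries.constantCoeff g = abar := by
    rw [habar_def, hg, ← PowerSeries.coeff_zero_eq_constantCoeff_apply,
      ← PowerSeries.coeff_succ_X_mul 0 g]
  have hccS : PowerSeries.constantCoeff (S f₀ uhat) = 1 := by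
    rw [← PowerSeries.coeff_zero_eq_constantCoeff_apply, krp_coeff_S hf₀0]
    simp [huhat]
  set p := g * S f₀ uhat with hp_def
  set q := PowerSeries.C abar * u with hq_def
  have hfp : f₀ * S f₀ uhat = PowerSeries.X * p := by rw [hp_def, hg]; ring
  have hfq : PowerSeries.C abar * PowerSeries.X * u = PowerSeries.X * q := by
    rw [hq_def]; ring
  have hXK : (PowerSeries.X : PowerSeries ℂ) ^ K * q ^ K =
      PowerSeries.X ^ K * p ^ K := by
    rw [← mul_pow, ← mul_pow, ← hfp, ← hfq]
    exact hpoweq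
  have hqp : q ^ K = p ^ K :=
    mul_left_cancel₀ (pow_ne_zero _ PowerSeries.X_ne_zero) hXK
  have hccp : PowerSeries.constantCoeff p = abar := by
    rw [hp_def, map_mul, hccg, hccS, mul_one]
  have hccq : PowerSeries.constantCoeff q = abar := by
    rw [hq_def, map_mul, PowerSeries.constantCoeff_C, hu, mul_one]
  have : q = p := krp_pow_eq hK habar hqp hccq hccp
  rw [hfp, hfq, this]
end

section
/- Formal implicit function theorem in one dependent variable: let ι(ŷ, X, Y) be a formal power series in three variables over ℂ with ι(0,0,0) = 0 and ∂ι/∂ŷ(0,0,0) ≠ 0. Then there exists a unique formal power series U(X, Y) with U(0,0) = 0 such that ι(U(X,Y), X, Y) = 0 as formal power series. -/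
open MvPowerSeries Finsupp Finset

namespace ImplicitAux

/-- The `(X,Y)`-part exponent of a 3-variable exponent. -/
noncomputable def m2 (d : Fin 3 →₀ ℕ) : Fin 2 →₀ ℕ :=
  Finsupp.single 0 (d 1) + Finsupp.single 1 (d 2)

/-- Bound used for the support of the substitution finsum. -/
noncomputable def Db (e : Fin 2 →₀ ℕ) : Fin 3 →₀ ℕ :=
  Finsupp.single 0 (e.degree + 1) + Finsupp.single 1 (e 0) + Finsupp.single 2 (e 1)

lemma m2_apply0 (d : Fin 3 →₀ ℕ) : m2 d 0 = d 1 := by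
  simp [m2, Finsupp.single_apply]

lemma m2_apply1 (d : Fin 3 →₀ ℕ) : m2 d 1 = d 2 := by
  simp [m2, Finsupp.single_apply]

lemma Db_apply0 (e : Fin 2 →₀ ℕ) : Db e 0 = e.degree + 1 := by
  simp [Db, Finsupp.single_apply]

lemma Db_apply1 (e : Fin 2 →₀ ℕ) : Db e 1 = e 0 := by
  simp [Db, Finsupp.single_apply]

lemma Db_apply2 (e : Fin 2 →₀ ℕ) : Db e 2 = e 1 := by
  simp [Db, Finsupp.single_apply]

lemma degree_add' (a b : Fin 2 →₀ ℕ) : (a + b).degree = a.degree + b.degree := by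
  simp only [Finsupp.degree_eq_weight_one]
  exact map_add _ a b

lemma degree_mono {a b : Fin 2 →₀ ℕ} (h : a ≤ b) : a.degree ≤ b.degree := by
  have h1 : b - a + a = b := tsub_add_cancel_of_le h
  have := degree_add' (b - a) a
  rw [h1] at this
  omega

lemma degree_sub_lt {a b : Fin 2 →₀ ℕ} (h : a ≤ b) (ha : a ≠ 0) :
    (b - a).degree < b.degree := by
  have h1 : b - a + a = b := tsub_add_cancel_of_le h
  have h2 := degree_add' (b - a) a
  rw [h1] at h2
  have h3 : a.degree ≠ 0 := fun hc => ha ((Finsupp.degree_eq_zero_iff a).mp hc)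
  omega

/-- The single term appearing in the substitution. -/
noncomputable def cT (U : MvPowerSeries (Fin 2) ℂ) (d : Fin 3 →₀ ℕ) (e : Fin 2 →₀ ℕ) : ℂ :=
  MvPowerSeries.coeff e (U ^ d 0 * MvPowerSeries.monomial (m2 d) 1)

lemma prodEq (U : MvPowerSeries (Fin 2) ℂ) (d : Fin 3 →₀ ℕ) :
    (d.prod fun s n => ![U, MvPowerSeries.X 0, MvPowerSeries.X 1] s ^ n)
      = U ^ d 0 * MvPowerSeries.monomial (m2 d) 1 := by
  rw [Finsupp.prod_fintype _ _ (fun i => pow_zero _), Fin.prod_univ_three]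
  simp only [Matrix.cons_val_zero, Matrix.cons_val_one, Matrix.head_cons,
    Matrix.cons_val_two, Matrix.tail_cons]
  rw [MvPowerSeries.X_pow_eq, MvPowerSeries.X_pow_eq, mul_assoc,
    MvPowerSeries.monomial_mul_monomial, one_mul, m2]

lemma cT_eq (U : MvPowerSeries (Fin 2) ℂ) (d : Fin 3 →₀ ℕ) (e : Fin 2 →₀ ℕ) :
    cT U d e = if m2 d ≤ e then MvPowerSeries.coeff (e - m2 d) (U ^ d 0) else 0 := by
  rw [cT, MvPowerSeries.coeff_mul_monomial]
  split_ifs <;> simp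

lemma le_Db_of_cT_ne (U : MvPowerSeries (Fin 2) ℂ)
    (hU : MvPowerSeries.constantCoeff U = 0) (e d : _)
    (h : cT U d e ≠ 0) : d ≤ Db e := by
  rw [cT_eq] at h
  by_cases hle : m2 d ≤ e
  · rw [if_pos hle] at h
    have h0 : d 0 ≤ (e - m2 d).degree := by
      by_contra hc
      exact h (MvPowerSeries.coeff_eq_zero_of_constantCoeff_nilpotent
        (by rw [hU, pow_one]) (by omega))
    have h0' : (e - m2 d).degree ≤ e.degree := degree_mono tsub_le_self
    have h1 : d 1 ≤ e 0 := by rw [← m2_apply0 d]; exact hle 0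
    have h2 : d 2 ≤ e 1 := by rw [← m2_apply1 d]; exact hle 1
    intro i
    fin_cases i
    · show d 0 ≤ Db e 0
      rw [Db_apply0]; omega
    · show d 1 ≤ Db e 1
      rw [Db_apply1]; exact h1
    · show d 2 ≤ Db e 2
      rw [Db_apply2]; exact h2
  · rw [if_neg hle] at h; exact absurd rfl h

lemma m2_single01 : m2 (Finsupp.single 0 1) = 0 := by
  ext i
  fin_cases i <;> simp [m2_apply0, m2_apply1, Finsupp.single_apply]

lemma cT_single01 (U : MvPowerSeries (Fin 2) ℂ) (e : Fin 2 →₀ ℕ) :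
    cT U (Finsupp.single 0 1) e = MvPowerSeries.coeff e U := by
  rw [cT, m2_single01, MvPowerSeries.monomial_zero_one, mul_one]
  norm_num [Finsupp.single_apply]

/-- Key comparison: for `d ≠ single 0 1`, the term `cT U d e` only depends on the
coefficients of `U` of degree `< e.degree`. -/
lemma cT_congr (U V : MvPowerSeries (Fin 2) ℂ)
    (hU : MvPowerSeries.constantCoeff U = 0)
    (hV : MvPowerSeries.constantCoeff V = 0) (e : Fin 2 →₀ ℕ)
    (hag : ∀ m : Fin 2 →₀ ℕ, m.degree < e.degree →
      MvPowerSeries.coeff m U = MvPowerSeries.coeff m V)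
    (d : Fin 3 →₀ ℕ) (hd : d ≠ Finsupp.single 0 1) :
    cT U d e = cT V d e := by
  rw [cT_eq, cT_eq]
  split_ifs with hle
  · have hdm : (e - m2 d).degree ≤ e.degree := degree_mono tsub_le_self
    obtain h0 | h1 | ⟨k, hk⟩ : d 0 = 0 ∨ d 0 = 1 ∨ ∃ k, d 0 = k + 2 := by
      rcases Nat.lt_or_ge (d 0) 2 with h | h
      · interval_cases h' : d 0 <;> simp
      · exact Or.inr (Or.inr ⟨d 0 - 2, by omega⟩)
    · rw [h0, pow_zero, pow_zero]
    · have hm2 : m2 d ≠ 0 := by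
        intro hc
        apply hd
        have hd1 : d 1 = 0 := by rw [← m2_apply0 d, hc]; rfl
        have hd2 : d 2 = 0 := by rw [← m2_apply1 d, hc]; rfl
        ext i
        fin_cases i <;> simp [h1, hd1, hd2, Finsupp.single_apply]
      rw [h1, pow_one, pow_one]
      exact hag _ (degree_sub_lt hle hm2)
    · classical
      rw [hk, MvPowerSeries.coeff_pow, MvPowerSeries.coeff_pow]
      apply Finset.sum_congr rfl
      intro l hl
      rw [Finset.mem_finsuppAntidiag] at hl
      obtain ⟨hsum, -⟩ := hl
      by_cases hz : ∃ i ∈ Finset.range (k + 2), l i = 0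
      · obtain ⟨i, hi, hzi⟩ := hz
        rw [Finset.prod_eq_zero hi, Finset.prod_eq_zero hi]
        · rw [hzi, MvPowerSeries.coeff_zero_eq_constantCoeff_apply, hV]
        · rw [hzi, MvPowerSeries.coeff_zero_eq_constantCoeff_apply, hU]
      · push_neg at hz
        apply Finset.prod_congr rfl
        intro i hi
        apply hag
        have hdeg : ∑ j ∈ Finset.range (k + 2), (l j).degree = (e - m2 d).degree := by
          rw [← hsum]
          simp only [Finsupp.degree_eq_weight_one]
          exact (map_sum _ _ _).symm
        obtain ⟨i', hi', hne⟩ : ∃ i', i' ∈ Finset.range (k + 2) ∧ i ≠ i' := by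
          by_cases h : i = 0
          · exact ⟨1, by simp, by omega⟩
          · exact ⟨0, by simp, by omega⟩
        have hpair : (l i).degree + (l i').degree ≤
            ∑ j ∈ Finset.range (k + 2), (l j).degree := by
          refine le_trans (le_of_eq
            (Finset.sum_pair (f := fun j => (l j).degree) hne).symm) ?_
          apply Finset.sum_le_sum_of_subset
          rw [Finset.mem_range] at hi hi'
          intro x hx
          rw [Finset.mem_insert, Finset.mem_singleton] at hx
          rw [Finset.mem_range]
          rcases hx with rfl | rfl <;> omega
        have h1' : 1 ≤ (l i').degree := by
          rw [Nat.one_le_iff_ne_zero]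
          intro hc
          exact hz i' hi' ((Finsupp.degree_eq_zero_iff _).mp hc)
        omega
  · rfl
lemma finsum_eq (ι : MvPowerSeries (Fin 3) ℂ) (U : MvPowerSeries (Fin 2) ℂ)
    (hU : MvPowerSeries.constantCoeff U = 0) (e : Fin 2 →₀ ℕ) :
    (∑ᶠ d : Fin 3 →₀ ℕ, MvPowerSeries.coeff d ι * MvPowerSeries.coeff e
        (d.prod fun s n => ![U, MvPowerSeries.X 0, MvPowerSeries.X 1] s ^ n))
    = MvPowerSeries.coeff (Finsupp.single 0 1) ι * MvPowerSeries.coeff e U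
      + ∑ d ∈ (Finset.Iic (Db e)).erase (Finsupp.single 0 1),
          MvPowerSeries.coeff d ι * cT U d e := by
  have hsub : (Function.support fun d => MvPowerSeries.coeff d ι * cT U d e)
      ⊆ ↑(Finset.Iic (Db e)) := by
    intro d hd
    simp only [Function.mem_support] at hd
    have hne : cT U d e ≠ 0 := fun hc => hd (by rw [hc, mul_zero])
    simpa using le_Db_of_cT_ne U hU e d hne
  have hmem : Finsupp.single (0 : Fin 3) 1 ∈ Finset.Iic (Db e) := by
    rw [Finset.mem_Iic, Finsupp.single_le_iff, Db_apply0]; omega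
  calc (∑ᶠ d : Fin 3 →₀ ℕ, MvPowerSeries.coeff d ι * MvPowerSeries.coeff e
        (d.prod fun s n => ![U, MvPowerSeries.X 0, MvPowerSeries.X 1] s ^ n))
      = ∑ᶠ d : Fin 3 →₀ ℕ, MvPowerSeries.coeff d ι * cT U d e := by
        apply finsum_congr; intro d; rw [prodEq]; rfl
    _ = ∑ d ∈ Finset.Iic (Db e), MvPowerSeries.coeff d ι * cT U d e :=
        finsum_eq_sum_of_support_subset _ hsub
    _ = MvPowerSeries.coeff (Finsupp.single 0 1) ι * cT U (Finsupp.single 0 1) e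
        + ∑ d ∈ (Finset.Iic (Db e)).erase (Finsupp.single 0 1),
            MvPowerSeries.coeff d ι * cT U d e :=
        (Finset.add_sum_erase _ _ hmem).symm
    _ = _ := by rw [cT_single01]

/-- The recursively defined coefficients of the solution. -/
noncomputable def u (ι : MvPowerSeries (Fin 3) ℂ) (e : Fin 2 →₀ ℕ) : ℂ :=
  if e = 0 then 0 else
    -(MvPowerSeries.coeff (Finsupp.single 0 1) ι)⁻¹ *
      ∑ d ∈ (Finset.Iic (Db e)).erase (Finsupp.single 0 1),
        MvPowerSeries.coeff d ι *
          cT (fun m => if h : m.degree < e.degree then u ι m else 0) d e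
termination_by e.degree
decreasing_by exact h

/-- The solution power series. -/
noncomputable def Usol (ι : MvPowerSeries (Fin 3) ℂ) : MvPowerSeries (Fin 2) ℂ :=
  fun e => u ι e

lemma coeff_Usol (ι : MvPowerSeries (Fin 3) ℂ) (e : Fin 2 →₀ ℕ) :
    MvPowerSeries.coeff e (Usol ι) = u ι e := rfl

lemma u_zero (ι : MvPowerSeries (Fin 3) ℂ) : u ι 0 = 0 := by
  rw [u]; simp

lemma constantCoeff_Usol (ι : MvPowerSeries (Fin 3) ℂ) :
    MvPowerSeries.constantCoeff (Usol ι) = 0 :=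
  (MvPowerSeries.coeff_zero_eq_constantCoeff_apply (Usol ι)).symm.trans (u_zero ι)

/-- The truncated solution used in the recursion. -/
noncomputable def Vtr (ι : MvPowerSeries (Fin 3) ℂ) (e : Fin 2 →₀ ℕ) :
    MvPowerSeries (Fin 2) ℂ :=
  fun m => if h : m.degree < e.degree then u ι m else 0

lemma constantCoeff_Vtr (ι : MvPowerSeries (Fin 3) ℂ) (e : Fin 2 →₀ ℕ) :
    MvPowerSeries.constantCoeff (Vtr ι e) = 0 := by
  rw [← MvPowerSeries.coeff_zero_eq_constantCoeff_apply]
  show (if h : (0 : Fin 2 →₀ ℕ).degree < e.degree then u ι 0 else 0) = 0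
  split_ifs with h
  · exact u_zero ι
  · rfl

lemma coeff_Vtr (ι : MvPowerSeries (Fin 3) ℂ) (e m : Fin 2 →₀ ℕ)
    (h : m.degree < e.degree) : MvPowerSeries.coeff m (Vtr ι e) = u ι m := by
  show (if h : m.degree < e.degree then u ι m else 0) = u ι m
  rw [dif_pos h]

lemma u_spec (ι : MvPowerSeries (Fin 3) ℂ) (e : Fin 2 →₀ ℕ) (he : e ≠ 0) :
    u ι e = -(MvPowerSeries.coeff (Finsupp.single 0 1) ι)⁻¹ *
      ∑ d ∈ (Finset.Iic (Db e)).erase (Finsupp.single 0 1),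
        MvPowerSeries.coeff d ι * cT (Vtr ι e) d e := by
  rw [u, if_neg he]; rfl

/-- The solution satisfies the equation. -/
lemma Usol_solves (ι : MvPowerSeries (Fin 3) ℂ)
    (hι0 : MvPowerSeries.constantCoeff ι = 0)
    (hι1 : MvPowerSeries.coeff (Finsupp.single (0 : Fin 3) 1) ι ≠ 0) (e : Fin 2 →₀ ℕ) :
    (∑ᶠ d : Fin 3 →₀ ℕ, MvPowerSeries.coeff d ι * MvPowerSeries.coeff e
        (d.prod fun s n => ![Usol ι, MvPowerSeries.X 0, MvPowerSeries.X 1] s ^ n)) = 0 := by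
  rw [finsum_eq ι (Usol ι) (constantCoeff_Usol ι) e]
  by_cases he : e = 0
  · subst he
    rw [coeff_Usol, u_zero, mul_zero, zero_add]
    apply Finset.sum_eq_zero
    intro d hd
    rw [Finset.mem_erase] at hd
    obtain ⟨hd1, _⟩ := hd
    by_cases hd0 : d = 0
    · subst hd0
      rw [show MvPowerSeries.coeff (0 : Fin 3 →₀ ℕ) ι =
        MvPowerSeries.constantCoeff ι from rfl, hι0, zero_mul]
    · rw [cT_eq, mul_eq_zero]
      right
      split_ifs with hle
      · have hm2 : m2 d = 0 := le_antisymm hle (zero_le (a := m2 d))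
        have hd1' : d 1 = 0 := by rw [← m2_apply0 d, hm2]; rfl
        have hd2' : d 2 = 0 := by rw [← m2_apply1 d, hm2]; rfl
        have hd0' : d 0 ≠ 0 := by
          intro hc
          apply hd0
          ext i
          fin_cases i <;> simp [hc, hd1', hd2']
        rw [hm2, tsub_zero, MvPowerSeries.coeff_zero_eq_constantCoeff_apply,
          map_pow, constantCoeff_Usol, zero_pow hd0']
      · rfl
  · have hag : ∀ m : Fin 2 →₀ ℕ, m.degree < e.degree →
        MvPowerSeries.coeff m (Usol ι) = MvPowerSeries.coeff m (Vtr ι e) := by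
      intro m hm
      rw [coeff_Usol, coeff_Vtr ι e m hm]
    have hsum : (∑ d ∈ (Finset.Iic (Db e)).erase (Finsupp.single 0 1),
          MvPowerSeries.coeff d ι * cT (Usol ι) d e)
        = ∑ d ∈ (Finset.Iic (Db e)).erase (Finsupp.single 0 1),
          MvPowerSeries.coeff d ι * cT (Vtr ι e) d e := by
      apply Finset.sum_congr rfl
      intro d hd
      rw [Finset.mem_erase] at hd
      rw [cT_congr (Usol ι) (Vtr ι e) (constantCoeff_Usol ι) (constantCoeff_Vtr ι e)
        e hag d hd.1]
    rw [hsum, coeff_Usol, u_spec ι e he]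
    field_simp
    ring

lemma unique_aux (ι : MvPowerSeries (Fin 3) ℂ)
    (hι1 : MvPowerSeries.coeff (Finsupp.single (0 : Fin 3) 1) ι ≠ 0)
    (U W : MvPowerSeries (Fin 2) ℂ)
    (hU0 : MvPowerSeries.constantCoeff U = 0)
    (hW0 : MvPowerSeries.constantCoeff W = 0)
    (hUeq : ∀ e : Fin 2 →₀ ℕ, (∑ᶠ d : Fin 3 →₀ ℕ, MvPowerSeries.coeff d ι *
      MvPowerSeries.coeff e
        (d.prod fun s n => ![U, MvPowerSeries.X 0, MvPowerSeries.X 1] s ^ n)) = 0)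
    (hWeq : ∀ e : Fin 2 →₀ ℕ, (∑ᶠ d : Fin 3 →₀ ℕ, MvPowerSeries.coeff d ι *
      MvPowerSeries.coeff e
        (d.prod fun s n => ![W, MvPowerSeries.X 0, MvPowerSeries.X 1] s ^ n)) = 0) :
    U = W := by
  have key : ∀ n : ℕ, ∀ e : Fin 2 →₀ ℕ, e.degree = n →
      MvPowerSeries.coeff e U = MvPowerSeries.coeff e W := by
    intro n
    induction n using Nat.strong_induction_on with
    | _ n IH =>
      intro e he
      have hag : ∀ m : Fin 2 →₀ ℕ, m.degree < e.degree →
          MvPowerSeries.coeff m U = MvPowerSeries.coeff m W :=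
        fun m hm => IH m.degree (he ▸ hm) m rfl
      have hu := hUeq e
      rw [finsum_eq ι U hU0 e] at hu
      have hw := hWeq e
      rw [finsum_eq ι W hW0 e] at hw
      have hs : (∑ d ∈ (Finset.Iic (Db e)).erase (Finsupp.single 0 1),
            MvPowerSeries.coeff d ι * cT U d e)
          = ∑ d ∈ (Finset.Iic (Db e)).erase (Finsupp.single 0 1),
            MvPowerSeries.coeff d ι * cT W d e := by
        apply Finset.sum_congr rfl
        intro d hd
        rw [Finset.mem_erase] at hd
        rw [cT_congr U W hU0 hW0 e hag d hd.1]
      apply mul_left_cancel₀ hι1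
      linear_combination hu - hw - hs
  exact MvPowerSeries.ext fun e => key e.degree e rfl

end ImplicitAux

/-- Formal implicit function theorem in one dependent variable: if
`ι(ŷ, X, Y)` is a formal power series in three variables over `ℂ` with `ι(0,0,0) = 0` and
`∂ι/∂ŷ(0,0,0) ≠ 0`, then there is a unique formal power series `U(X,Y)` with `U(0,0) = 0`
such that `ι(U(X,Y), X, Y) = 0`. -/
theorem formal_implicit_function_theorem (ι : MvPowerSeries (Fin 3) ℂ)
    (hι0 : MvPowerSeries.constantCoeff ι = 0)
    (hι1 : MvPowerSeries.coeff (Finsupp.single (0 : Fin 3) 1) ι ≠ 0) :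
    ∃! U : MvPowerSeries (Fin 2) ℂ,
      MvPowerSeries.constantCoeff U = 0 ∧
      substF ![U, MvPowerSeries.X 0, MvPowerSeries.X 1] ι = 0 := by
  refine ⟨ImplicitAux.Usol ι, ⟨ImplicitAux.constantCoeff_Usol ι,
    funext fun e => ImplicitAux.Usol_solves ι hι0 hι1 e⟩, ?_⟩
  intro W hW
  exact ImplicitAux.unique_aux ι hι1 W (ImplicitAux.Usol ι) hW.1
    (ImplicitAux.constantCoeff_Usol ι)
    (fun e => congrFun hW.2 e)
    (fun e => ImplicitAux.Usol_solves ι hι0 hι1 e)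
end
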